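/- arXiv:2407.07261 — 8 statements merged into one kernel-verified Lean document; each statement's English description precedes it below -/
import Mathlib

section
/- Let (V,⟨·,·⟩) be a finite-dimensional real vector space with a positive definite inner product, let A : V → V be a linear operator that is self-adjoint with respect to ⟨·,·⟩, let q > 0 with q ≠ 1, and let C : V → V be a linear isometry of ⟨·,·⟩ (i.e. ⟨Cv,Cw⟩ = ⟨v,w⟩ for all v,w ∈ V) such that C∘A∘C⁻¹ = q²·A. Then A = 0. -/
open scoped InnerProductSpace

/-- A self-adjoint operator `A` on a finite-dimensional Euclidean vector space which is
conjugate, by a linear isometry `C`, to `q² · A` with `q > 0`, `q ≠ 1`, must vanish. -/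
theorem stmt_0 {V : Type*} [NormedAddCommGroup V] [InnerProductSpace ℝ V]
    [FiniteDimensional ℝ V]
    (A : V →ₗ[ℝ] V) (hA : ∀ v w : V, ⟪A v, w⟫_ℝ = ⟪v, A w⟫_ℝ)
    (q : ℝ) (hq : 0 < q) (hq1 : q ≠ 1)
    (C : V →ₗ[ℝ] V) (hCiso : ∀ v w : V, ⟪C v, C w⟫_ℝ = ⟪v, w⟫_ℝ)
    (hconj : C ∘ₗ A = q ^ 2 • (A ∘ₗ C)) :
    A = 0 := by
  -- C is injective, hence bijective in finite dimension
  have hinj : Function.Injective C := by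
    intro v w h
    have h0 : ⟪v - w, v - w⟫_ℝ = 0 := by
      have := hCiso (v - w) (v - w)
      rw [map_sub, h, sub_self, inner_zero_left] at this
      linarith
    exact sub_eq_zero.mp (inner_self_eq_zero.mp h0)
  have hsurj : Function.Surjective C :=
    (LinearMap.injective_iff_surjective).mp hinj
  let e : V ≃ₗ[ℝ] V := LinearEquiv.ofBijective C ⟨hinj, hsurj⟩
  -- e.conj A = q² • A
  have hconj' : e.conj A = (q ^ 2 : ℝ) • A := by
    apply LinearMap.ext
    intro v
    obtain ⟨w, rfl⟩ := hsurj v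
    have he : e.symm (C w) = w := e.symm_apply_apply w
    rw [LinearEquiv.conj_apply_apply]
    change C (A (e.symm (C w))) = (q ^ 2 • A) (C w)
    rw [he]
    have := congrArg (fun f => f w) hconj
    simpa using this
  -- trace of A² via conjugation
  have h1 : e.conj (A ∘ₗ A) = ((q ^ 2) ^ 2 : ℝ) • (A ∘ₗ A) := by
    rw [LinearEquiv.conj_comp, hconj', LinearMap.smul_comp, LinearMap.comp_smul,
      smul_smul, ← pow_two]
  have htr : LinearMap.trace ℝ V (A ∘ₗ A) = (q ^ 2) ^ 2 * LinearMap.trace ℝ V (A ∘ₗ A) := by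
    calc LinearMap.trace ℝ V (A ∘ₗ A) = LinearMap.trace ℝ V (e.conj (A ∘ₗ A)) :=
          (LinearMap.trace_conj' (A ∘ₗ A) e).symm
      _ = (q ^ 2) ^ 2 * LinearMap.trace ℝ V (A ∘ₗ A) := by
          rw [h1, map_smul, smul_eq_mul]
  have hq4 : (q ^ 2) ^ 2 ≠ 1 := by
    intro h
    rcases lt_trichotomy q 1 with h' | h' | h'
    · have h2 : q ^ 2 < 1 := by nlinarith
      nlinarith
    · exact hq1 h'
    · have h2 : 1 < q ^ 2 := by nlinarith
      nlinarith
  have htr0 : LinearMap.trace ℝ V (A ∘ₗ A) = 0 := by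
    have h2 : ((q ^ 2) ^ 2 - 1) * LinearMap.trace ℝ V (A ∘ₗ A) = 0 := by
      rw [sub_mul, one_mul, ← htr, sub_self]
    rcases mul_eq_zero.mp h2 with h3 | h3
    · exact absurd (by linarith : (q ^ 2) ^ 2 = 1) hq4
    · exact h3
  -- trace(A²) = ∑ ‖A bᵢ‖² via orthonormal basis
  let b := stdOrthonormalBasis ℝ V
  have htr_sum : LinearMap.trace ℝ V (A ∘ₗ A) = ∑ i, ⟪A (b i), A (b i)⟫_ℝ := by
    rw [LinearMap.trace_eq_matrix_trace ℝ b.toBasis, Matrix.trace]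
    apply Finset.sum_congr rfl
    intro i _
    rw [Matrix.diag_apply, LinearMap.toMatrix_apply]
    rw [OrthonormalBasis.coe_toBasis_repr_apply, OrthonormalBasis.coe_toBasis,
      OrthonormalBasis.repr_apply_apply]
    simp only [LinearMap.comp_apply]
    rw [← hA]
  have hall : ∀ i, A (b i) = 0 := by
    intro i
    have hnn : ∀ j ∈ Finset.univ, (0:ℝ) ≤ ⟪A (b j), A (b j)⟫_ℝ :=
      fun j _ => real_inner_self_nonneg
    have := (Finset.sum_eq_zero_iff_of_nonneg hnn).mp (by rw [← htr_sum]; exact htr0) i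
      (Finset.mem_univ i)
    exact inner_self_eq_zero.mp this
  -- conclude
  apply LinearMap.ext
  intro v
  have hv : v = ∑ i, b.repr v i • b i := (b.sum_repr v).symm
  rw [hv, map_sum]
  simp only [map_smul, hall, smul_zero]
  simp
end

section
/- For every u ∈ 𝓔, the function σu belongs to 𝓔; the resulting map σ : 𝓔 → 𝓔 is a linear bijection; and Ω(σu, σw) = q⁻¹·Ω(u,w) for all u, w ∈ 𝓔. -/
noncomputable section

variable {V : Type*} [NormedAddCommGroup V] [NormedSpace ℝ V]

/-- The space `𝓔` of (twice continuously differentiable) solutions of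
`u'(t) = f(t)·u(t) + A(u(t))` on `I`, extended by zero off `I`. -/
def solSpace (I : Set ℝ) (f : ℝ → ℝ) (A : V →ₗ[ℝ] V) : Submodule ℝ (ℝ → V) where
  carrier := {u | (∀ t ∉ I, u t = 0) ∧ ∃ u' : ℝ → V,
      (∀ t ∈ I, HasDerivAt u (u' t) t) ∧
      (∀ t ∈ I, HasDerivAt u' (f t • u t + A (u t)) t)}
  zero_mem' := by
    refine ⟨fun t _ => rfl, 0, fun t ht => ?_, fun t ht => ?_⟩
    · simpa using hasDerivAt_const t (0 : V)
    · simpa using hasDerivAt_const t (0 : V)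
  add_mem' := by
    rintro u v ⟨hu0, u', hu1, hu2⟩ ⟨hv0, v', hv1, hv2⟩
    refine ⟨fun t ht => by simp [hu0 t ht, hv0 t ht], u' + v', fun t ht => ?_, fun t ht => ?_⟩
    · simpa using (hu1 t ht).add (hv1 t ht)
    · have h := (hu2 t ht).add (hv2 t ht)
      have he : f t • (u + v) t + A ((u + v) t)
          = f t • u t + A (u t) + (f t • v t + A (v t)) := by
        simp [smul_add]
        abel
      rw [he]
      simpa using h
  smul_mem' := by
    rintro c u ⟨hu0, u', hu1, hu2⟩
    refine ⟨fun t ht => by simp [hu0 t ht], c • u', fun t ht => ?_, fun t ht => ?_⟩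
    · simpa using (hu1 t ht).const_smul c
    · have h := (hu2 t ht).const_smul c
      have he : f t • (c • u) t + A ((c • u) t) = c • (f t • u t + A (u t)) := by
        simp [smul_add, smul_smul, mul_comm]
      rw [he]
      simpa using h


/-- The action `(σu)(t) = C (u (q⁻¹(t − p)))` of a triple `σ = (q,p,C)`. -/
def sigmaAct (q p : ℝ) (C : V →ₗ[ℝ] V) (u : ℝ → V) : ℝ → V :=
  fun t => C (u (q⁻¹ * (t - p)))

section Aux

variable {V : Type*} [NormedAddCommGroup V] [NormedSpace ℝ V] [FiniteDimensional ℝ V]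

lemma hasDerivAt_sigma (C : V →ₗ[ℝ] V) (u : ℝ → V) (q p t : ℝ) (d : V)
    (hu : HasDerivAt u d (q⁻¹ * (t - p))) :
    HasDerivAt (fun s => C (u (q⁻¹ * (s - p)))) (q⁻¹ • C d) t := by
  have h1 : HasDerivAt (fun s : ℝ => q⁻¹ * (s - p)) q⁻¹ t := by
    simpa using ((hasDerivAt_id t).sub_const p).const_mul q⁻¹
  have h2 : HasDerivAt (u ∘ fun s : ℝ => q⁻¹ * (s - p)) (q⁻¹ • d) t := hu.scomp t h1
  have h3 := (LinearMap.toContinuousLinearMap C).hasFDerivAt.comp_hasDerivAt t h2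
  simpa [Function.comp_def, map_smul] using h3

lemma sigma_mem (I : Set ℝ) (f : ℝ → ℝ) (A : V →ₗ[ℝ] V) (q p : ℝ) (hq : q ≠ 0)
    (C : V →ₗ[ℝ] V) (hCA : ∀ v, C (A v) = q ^ 2 • A (C v))
    (hIbij : Set.BijOn (fun t => q * t + p) I I)
    (hfq : ∀ t ∈ I, f t = q ^ 2 * f (q * t + p)) :
    ∀ u ∈ solSpace I f A, sigmaAct q p C u ∈ solSpace I f A := by
  rintro u ⟨hu0, u', hu1, hu2⟩
  have hmem : ∀ t ∈ I, q⁻¹ * (t - p) ∈ I := by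
    intro t ht
    obtain ⟨s, hs, hst⟩ := hIbij.surjOn ht
    simp only at hst
    have : q⁻¹ * (t - p) = s := by
      rw [← hst]; field_simp; ring
    rwa [this]
  have hnmem : ∀ t ∉ I, q⁻¹ * (t - p) ∉ I := by
    intro t ht hmem'
    have h2 := hIbij.mapsTo hmem'
    have : q * (q⁻¹ * (t - p)) + p = t := by rw [mul_inv_cancel_left₀ hq]; ring
    rw [this] at h2
    exact ht h2
  refine ⟨fun t ht => by simp [sigmaAct, hu0 _ (hnmem t ht)],
    fun t => q⁻¹ • C (u' (q⁻¹ * (t - p))), fun t ht => ?_, fun t ht => ?_⟩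
  · exact hasDerivAt_sigma C u q p t _ (hu1 _ (hmem t ht))
  · have h := (hasDerivAt_sigma C u' q p t _ (hu2 _ (hmem t ht))).const_smul q⁻¹
    have hft : f (q⁻¹ * (t - p)) = q ^ 2 * f t := by
      have h3 := hfq _ (hmem t ht)
      have harg : q * (q⁻¹ * (t - p)) + p = t := by field_simp; ring
      rwa [harg] at h3
    have key : q⁻¹ • q⁻¹ • C (f (q⁻¹ * (t - p)) • u (q⁻¹ * (t - p)) + A (u (q⁻¹ * (t - p))))
        = f t • sigmaAct q p C u t + A (sigmaAct q p C u t) := by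
      have e1 : q⁻¹ * (q⁻¹ * (q ^ 2 * f t)) = f t := by field_simp
      have e2 : q⁻¹ * (q⁻¹ * q ^ 2) = 1 := by field_simp
      simp only [sigmaAct, map_add, map_smul, hCA, hft, smul_add, smul_smul, e1, e2, one_smul]
    rw [← key]
    exact h

lemma hasDerivAt_bilin (g : V →ₗ[ℝ] V →ₗ[ℝ] ℝ) {a b : ℝ → V} {a' b' : V} {t : ℝ}
    (ha : HasDerivAt a a' t) (hb : HasDerivAt b b' t) :
    HasDerivAt (fun s => g (a s) (b s)) (g a' (b t) + g (a t) b') t := by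
  set G : V →L[ℝ] V →L[ℝ] ℝ :=
    LinearMap.toContinuousLinearMap
      (((LinearMap.toContinuousLinearMap :
          (V →ₗ[ℝ] ℝ) ≃ₗ[ℝ] (V →L[ℝ] ℝ)) : (V →ₗ[ℝ] ℝ) →ₗ[ℝ] (V →L[ℝ] ℝ)) ∘ₗ g) with hG
  have hGapp : ∀ v w, G v w = g v w := by
    intro v w
    simp [hG]
  have h1 : HasDerivAt (fun s => G (a s)) (G a') t := by
    simpa [Function.comp_def] using G.hasFDerivAt.comp_hasDerivAt t ha
  have h2 := h1.clm_apply hb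
  simpa only [hGapp] using h2

lemma omega_const (g : V →ₗ[ℝ] V →ₗ[ℝ] ℝ)
    (A : V →ₗ[ℝ] V) (hA : ∀ v w, g (A v) w = g v (A w))
    (I : Set ℝ) (hIconn : I.OrdConnected) (f : ℝ → ℝ)
    {u u' w w' : ℝ → V}
    (hu1 : ∀ t ∈ I, HasDerivAt u (u' t) t)
    (hu2 : ∀ t ∈ I, HasDerivAt u' (f t • u t + A (u t)) t)
    (hw1 : ∀ t ∈ I, HasDerivAt w (w' t) t)
    (hw2 : ∀ t ∈ I, HasDerivAt w' (f t • w t + A (w t)) t)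
    {a b : ℝ} (ha : a ∈ I) (hb : b ∈ I) :
    g (u' a) (w a) - g (u a) (w' a) = g (u' b) (w b) - g (u b) (w' b) := by
  set W : ℝ → ℝ := fun t => g (u' t) (w t) - g (u t) (w' t) with hW
  have hderiv : ∀ t ∈ I, HasDerivWithinAt W ((fun _ => (0 : ℝ)) t) I t := by
    intro t ht
    have h1 := (hasDerivAt_bilin g (hu2 t ht) (hw1 t ht)).sub
      (hasDerivAt_bilin g (hu1 t ht) (hw2 t ht))
    have hz : g (f t • u t + A (u t)) (w t) + g (u' t) (w' t)
        - (g (u' t) (w' t) + g (u t) (f t • w t + A (w t))) = 0 := by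
      simp only [map_add, map_smul, LinearMap.add_apply, LinearMap.smul_apply, smul_eq_mul,
        hA (u t) (w t)]
      ring
    rw [hz] at h1
    exact h1.hasDerivWithinAt
  have hconv : Convex ℝ I := convex_iff_ordConnected.mpr hIconn
  have hle := hconv.norm_image_sub_le_of_norm_hasDerivWithin_le (C := 0) hderiv
    (fun x _ => by simp) hb ha
  have : W a - W b = 0 := by
    have h0 : ‖W a - W b‖ ≤ 0 := by simpa using hle
    simpa using le_antisymm h0 (norm_nonneg _)
  have := sub_eq_zero.mp this
  simpa [hW] using this

end Aux

/-- `σ` maps `𝓔` into `𝓔`, acts on `𝓔` as a linear bijection, and satisfies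
`Ω(σu, σw) = q⁻¹ · Ω(u,w)`. -/
theorem stmt_5 {V : Type*} [NormedAddCommGroup V] [NormedSpace ℝ V] [FiniteDimensional ℝ V]
    (g : V →ₗ[ℝ] V →ₗ[ℝ] ℝ) (hg_symm : ∀ v w : V, g v w = g w v)
    (hg_nondeg : ∀ v : V, (∀ w : V, g v w = 0) → v = 0)
    (A : V →ₗ[ℝ] V) (hA : ∀ v w : V, g (A v) w = g v (A w))
    (I : Set ℝ) (hIopen : IsOpen I) (hIne : I.Nonempty) (hIconn : I.OrdConnected)
    (f : ℝ → ℝ) (hf : ContDiffOn ℝ (⊤ : ℕ∞) f I)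
    (q p : ℝ) (hq : 0 < q) (C : V →ₗ[ℝ] V)
    (hCiso : ∀ v w : V, g (C v) (C w) = g v w)
    (hCA : C ∘ₗ A = q ^ 2 • (A ∘ₗ C))
    (hIbij : Set.BijOn (fun t => q * t + p) I I)
    (hfq : ∀ t ∈ I, f t = q ^ 2 * f (q * t + p)) :
    (∀ u ∈ solSpace I f A, sigmaAct q p C u ∈ solSpace I f A) ∧
    (∃ σL : solSpace I f A ≃ₗ[ℝ] solSpace I f A,
        ∀ (u : solSpace I f A) (t : ℝ), (σL u : ℝ → V) t = C ((u : ℝ → V) (q⁻¹ * (t - p)))) ∧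
    (∀ u ∈ solSpace I f A, ∀ w ∈ solSpace I f A, ∀ t ∈ I,
        g (deriv (sigmaAct q p C u) t) (sigmaAct q p C w t)
            - g (sigmaAct q p C u t) (deriv (sigmaAct q p C w) t)
          = q⁻¹ * (g (deriv u t) (w t) - g (u t) (deriv w t))) := by
  have hq0 : q ≠ 0 := ne_of_gt hq
  have hCA' : ∀ v, C (A v) = q ^ 2 • A (C v) := by
    intro v
    have := LinearMap.congr_fun hCA v
    simpa using this
  have hT := sigma_mem I f A q p hq0 C hCA' hIbij hfq
  -- inverse isometry
  have hCinj : Function.Injective C := by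
    rw [injective_iff_map_eq_zero]
    intro v hv
    refine hg_nondeg v fun w => ?_
    rw [← hCiso v w, hv]
    simp
  set Ce : V ≃ₗ[ℝ] V := LinearMap.linearEquivOfInjective C hCinj rfl with hCe
  set Cinv : V →ₗ[ℝ] V := (Ce.symm : V →ₗ[ℝ] V) with hCinvdef
  have hCe_apply : ∀ v, Ce v = C v := fun v =>
    LinearMap.linearEquivOfInjective_apply hCinj rfl v
  have hCCinv : ∀ v, C (Cinv v) = v := by
    intro v
    rw [hCinvdef, ← hCe_apply]
    simp
  have hCinvC : ∀ v, Cinv (C v) = v := by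
    intro v
    rw [hCinvdef, ← hCe_apply]
    simp
  have hCAinv : ∀ v, Cinv (A v) = (q⁻¹) ^ 2 • A (Cinv v) := by
    intro v
    have h1 : C (A (Cinv v)) = q ^ 2 • A v := by
      rw [hCA' (Cinv v), hCCinv]
    have h2 : A (Cinv v) = Cinv (q ^ 2 • A v) := by
      rw [← h1, hCinvC]
    rw [map_smul] at h2
    rw [h2, smul_smul, show (q⁻¹ : ℝ) ^ 2 * q ^ 2 = 1 by field_simp, one_smul]
  have hIbij_inv : Set.BijOn (fun t => q⁻¹ * t + -(q⁻¹ * p)) I I := by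
    refine Set.BijOn.symm ⟨fun t _ => ?_, fun t _ => ?_⟩ hIbij
    · simp only; field_simp; ring
    · simp only; field_simp; ring
  have hfq_inv : ∀ t ∈ I, f t = q⁻¹ ^ 2 * f (q⁻¹ * t + -(q⁻¹ * p)) := by
    intro t ht
    have hs : q⁻¹ * t + -(q⁻¹ * p) ∈ I := hIbij_inv.mapsTo ht
    have h3 := hfq _ hs
    have harg : q * (q⁻¹ * t + -(q⁻¹ * p)) + p = t := by field_simp; ring
    rw [harg] at h3
    rw [h3]
    field_simp
  have hS := sigma_mem I f A q⁻¹ (-(q⁻¹ * p)) (inv_ne_zero hq0) Cinv hCAinv hIbij_inv hfq_inv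
  refine ⟨hT, ?_, ?_⟩
  · -- linear equivalence
    set T : solSpace I f A →ₗ[ℝ] solSpace I f A :=
      { toFun := fun u => ⟨sigmaAct q p C u, hT u u.2⟩
        map_add' := by intro u v; apply Subtype.ext; funext t; simp [sigmaAct]
        map_smul' := by intro c u; apply Subtype.ext; funext t; simp [sigmaAct] } with hTdef
    set S : solSpace I f A →ₗ[ℝ] solSpace I f A :=
      { toFun := fun u => ⟨sigmaAct q⁻¹ (-(q⁻¹ * p)) Cinv u, hS u u.2⟩
        map_add' := by intro u v; apply Subtype.ext; funext t; simp [sigmaAct]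
        map_smul' := by intro c u; apply Subtype.ext; funext t; simp [sigmaAct] } with hSdef
    have hTS : T ∘ₗ S = LinearMap.id := by
      apply LinearMap.ext
      intro u
      apply Subtype.ext
      funext t
      show sigmaAct q p C (sigmaAct q⁻¹ (-(q⁻¹ * p)) Cinv u) t = (u : ℝ → V) t
      simp only [sigmaAct, inv_inv]
      rw [show q * (q⁻¹ * (t - p) - -(q⁻¹ * p)) = t by field_simp; ring, hCCinv]
    have hST : S ∘ₗ T = LinearMap.id := by
      apply LinearMap.ext
      intro u
      apply Subtype.ext
      funext t
      show sigmaAct q⁻¹ (-(q⁻¹ * p)) Cinv (sigmaAct q p C u) t = (u : ℝ → V) t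
      simp only [sigmaAct, inv_inv]
      rw [show q⁻¹ * (q * (t - -(q⁻¹ * p)) - p) = t by field_simp; ring, hCinvC]
    exact ⟨LinearEquiv.ofLinear T S hTS hST, fun u t => rfl⟩
  · -- the Wronskian identity
    rintro u ⟨hu0, u', hu1, hu2⟩ w ⟨hw0, w', hw1, hw2⟩ t ht
    have hst : q⁻¹ * (t - p) ∈ I := by
      obtain ⟨s, hs, hsq⟩ := hIbij.surjOn ht
      simp only at hsq
      rwa [show q⁻¹ * (t - p) = s by rw [← hsq]; field_simp; ring]
    have hdu : deriv (sigmaAct q p C u) t = q⁻¹ • C (u' (q⁻¹ * (t - p))) :=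
      (hasDerivAt_sigma C u q p t _ (hu1 _ hst)).deriv
    have hdw : deriv (sigmaAct q p C w) t = q⁻¹ • C (w' (q⁻¹ * (t - p))) :=
      (hasDerivAt_sigma C w q p t _ (hw1 _ hst)).deriv
    have hdu' : deriv u t = u' t := (hu1 t ht).deriv
    have hdw' : deriv w t = w' t := (hw1 t ht).deriv
    have hconst := omega_const g A hA I hIconn f hu1 hu2 hw1 hw2 hst ht
    rw [hdu, hdw, hdu', hdw']
    show g (q⁻¹ • C (u' (q⁻¹ * (t - p)))) (C (w (q⁻¹ * (t - p))))
        - g (C (u (q⁻¹ * (t - p)))) (q⁻¹ • C (w' (q⁻¹ * (t - p))))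
        = q⁻¹ * (g (u' t) (w t) - g (u t) (w' t))
    rw [← hconst]
    simp only [map_smul, LinearMap.smul_apply, smul_eq_mul, hCiso]
    ring
end
end

section
/- For σ = (q,p,C) satisfying the stated conditions, r ∈ ℝ and u ∈ 𝓔, the map Φ_{(σ,r,u)} : M̂ → M̂ is a differentiable bijection and is an isometry of the standard ECS plane wave metric: for every x ∈ M̂ and all vectors w₁, w₂ ∈ ℝ × ℝ × V, one has ĝ_{Φ_{(σ,r,u)}(x)}(DΦ_x(w₁), DΦ_x(w₂)) = ĝ_x(w₁, w₂), where DΦ_x denotes the Fréchet derivative of Φ_{(σ,r,u)} at x. -/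
noncomputable section

variable {V : Type*} [NormedAddCommGroup V] [NormedSpace ℝ V]

/-- The "stated conditions" on a triple `σ = (q,p,C)`. -/
def SigmaCond (g : V →ₗ[ℝ] V →ₗ[ℝ] ℝ) (A : V →ₗ[ℝ] V) (I : Set ℝ) (f : ℝ → ℝ)
    (q p : ℝ) (C : V →ₗ[ℝ] V) : Prop :=
  0 < q ∧ (∀ v w : V, g (C v) (C w) = g v w) ∧ (C ∘ₗ A = q ^ 2 • (A ∘ₗ C)) ∧
    Set.BijOn (fun t => q * t + p) I I ∧ (∀ t ∈ I, f t = q ^ 2 * f (q * t + p))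

/-- The map `Φ_{(σ,r,u)}(t,s,v) = (qt+p, −⟨u'(qt+p), 2Cv + u(qt+p)⟩ + q⁻¹s + r, Cv + u(qt+p))`. -/
def Phi (g : V →ₗ[ℝ] V →ₗ[ℝ] ℝ) (q p r : ℝ) (C : V →ₗ[ℝ] V) (u : ℝ → V)
    (x : ℝ × ℝ × V) : ℝ × ℝ × V :=
  (q * x.1 + p,
   -(g (deriv u (q * x.1 + p)) ((2 : ℝ) • C x.2.2 + u (q * x.1 + p))) + q⁻¹ * x.2.1 + r,
   C x.2.2 + u (q * x.1 + p))

/-- The standard ECS plane-wave metric `κ dt² + dt ds + ⟨·,·⟩` at the point `x`, evaluated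
on the pair of tangent vectors `w₁, w₂ ∈ ℝ × ℝ × V`, with `κ(t,s,v) = f(t)⟨v,v⟩ + ⟨Av,v⟩`. -/
def ghat (g : V →ₗ[ℝ] V →ₗ[ℝ] ℝ) (A : V →ₗ[ℝ] V) (f : ℝ → ℝ)
    (x w₁ w₂ : ℝ × ℝ × V) : ℝ :=
  (f x.1 * g x.2.2 x.2.2 + g (A x.2.2) x.2.2) * (w₁.1 * w₂.1)
    + (w₁.1 * w₂.2.1 + w₁.2.1 * w₂.1) / 2 + g w₁.2.2 w₂.2.2

/-- `Φ_{(σ,r,u)}` is a differentiable bijection of `M̂ = I × ℝ × V` onto itself and is an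
isometry of the standard ECS plane-wave metric `ĝ`. -/
theorem stmt_7 {V : Type*} [NormedAddCommGroup V] [NormedSpace ℝ V] [FiniteDimensional ℝ V]
    (g : V →ₗ[ℝ] V →ₗ[ℝ] ℝ) (hg_symm : ∀ v w : V, g v w = g w v)
    (hg_nondeg : ∀ v : V, (∀ w : V, g v w = 0) → v = 0)
    (A : V →ₗ[ℝ] V) (hA : ∀ v w : V, g (A v) w = g v (A w))
    (I : Set ℝ) (hIopen : IsOpen I) (hIne : I.Nonempty) (hIconn : I.OrdConnected)
    (f : ℝ → ℝ) (hf : ContDiffOn ℝ (⊤ : ℕ∞) f I)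
    (q p : ℝ) (C : V →ₗ[ℝ] V) (hσ : SigmaCond g A I f q p C)
    (r : ℝ) (u : ℝ → V) (hu : u ∈ solSpace I f A) :
    Set.BijOn (Phi g q p r C u) {x : ℝ × ℝ × V | x.1 ∈ I} {x : ℝ × ℝ × V | x.1 ∈ I} ∧
    DifferentiableOn ℝ (Phi g q p r C u) {x : ℝ × ℝ × V | x.1 ∈ I} ∧
    (∀ x ∈ {x : ℝ × ℝ × V | x.1 ∈ I}, ∀ w₁ w₂ : ℝ × ℝ × V,
      ghat g A f (Phi g q p r C u x)
          (fderiv ℝ (Phi g q p r C u) x w₁) (fderiv ℝ (Phi g q p r C u) x w₂)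
        = ghat g A f x w₁ w₂) := by
  obtain ⟨hq, hCiso, hCA, hbij, hfq⟩ := hσ
  obtain ⟨hu0, u', hu1, hu2⟩ := hu
  have hq0 : q ≠ 0 := ne_of_gt hq
  have hud : ∀ s ∈ I, deriv u s = u' s := fun s hs => (hu1 s hs).deriv
  -- C is bijective
  have hCinj : Function.Injective C := by
    intro a b hab
    have h0 : C (a - b) = 0 := by rw [map_sub, hab, sub_self]
    have := hg_nondeg (a - b) (fun w => by
      have := hCiso (a - b) w
      rw [h0] at this
      simpa using this.symm)
    exact sub_eq_zero.mp this
  have hCbij : Function.Bijective C :=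
    ⟨hCinj, (LinearMap.injective_iff_surjective).mp hCinj⟩
  set e : V ≃ₗ[ℝ] V := LinearEquiv.ofBijective C hCbij with he
  -- the key derivative computation
  have key : ∀ x : ℝ × ℝ × V, x.1 ∈ I →
      ∃ D : (ℝ × ℝ × V) →L[ℝ] (ℝ × ℝ × V),
      HasFDerivAt (Phi g q p r C u) D x ∧
      ∀ w : ℝ × ℝ × V, D w =
        ((q * w.1 : ℝ),
         (-((q * w.1) * g (f (q*x.1+p) • u (q*x.1+p) + A (u (q*x.1+p)))
              ((2 : ℝ) • C x.2.2 + u (q*x.1+p))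
            + g (u' (q*x.1+p)) ((2 : ℝ) • C w.2.2 + (q * w.1) • u' (q*x.1+p)))
            + q⁻¹ * w.2.1 : ℝ),
         (C w.2.2 + (q * w.1) • u' (q*x.1+p) : V)) := by
    intro x hx1
    set t' := q * x.1 + p with ht'
    have hx : q * x.1 + p ∈ I := hbij.mapsTo hx1
    have hW' : HasDerivAt (deriv u) (f t' • u t' + A (u t')) t' :=
      (hu2 t' hx).congr_of_eventuallyEq
        (by filter_upwards [hIopen.mem_nhds hx] with z hz using hud z hz)
    set Bg : V →L[ℝ] V →L[ℝ] ℝ := LinearMap.toContinuousLinearMap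
        ((LinearMap.toContinuousLinearMap :
          (V →ₗ[ℝ] ℝ) ≃ₗ[ℝ] (V →L[ℝ] ℝ)).toLinearMap ∘ₗ g) with hBgdef
    have hBg : ∀ a b, Bg a b = g a b := fun a b => rfl
    set Ccl : V →L[ℝ] V := LinearMap.toContinuousLinearMap C with hCcl
    set fst1 : (ℝ × ℝ × V) →L[ℝ] ℝ := ContinuousLinearMap.fst ℝ ℝ (ℝ × V)
    set pr21 : (ℝ × ℝ × V) →L[ℝ] ℝ :=
      (ContinuousLinearMap.fst ℝ ℝ V).comp (ContinuousLinearMap.snd ℝ ℝ (ℝ × V))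
    set pr22 : (ℝ × ℝ × V) →L[ℝ] V :=
      (ContinuousLinearMap.snd ℝ ℝ V).comp (ContinuousLinearMap.snd ℝ ℝ (ℝ × V))
    have hφ : HasFDerivAt (fun y : ℝ × ℝ × V => q * y.1 + p) (q • fst1) x :=
      (hasFDerivAt_fst.const_mul q).add_const p
    have hU := ((hu1 _ hx).hasFDerivAt.comp x hφ :
      HasFDerivAt (fun y : ℝ × ℝ × V => u (q * y.1 + p)) _ x)
    have hW := (HasFDerivAt.comp (g := deriv u) x hW'.hasFDerivAt hφ :
      HasFDerivAt (fun y : ℝ × ℝ × V => deriv u (q * y.1 + p)) _ x)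
    have hBgW := Bg.hasFDerivAt.comp x hW
    have hCy : HasFDerivAt (fun y : ℝ × ℝ × V => C y.2.2) (Ccl.comp pr22) x :=
      (Ccl.comp pr22).hasFDerivAt
    have hZ := (hCy.const_smul (2:ℝ)).add hU
    have hgpart := hBgW.clm_apply hZ
    have hs1 : HasFDerivAt (fun y : ℝ × ℝ × V => q⁻¹ * y.2.1) (q⁻¹ • pr21) x := by
      have : HasFDerivAt (fun y : ℝ × ℝ × V => y.2.1) pr21 x := pr21.hasFDerivAt
      exact this.const_mul q⁻¹
    have hS := ((hgpart.neg).add hs1).add_const r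
    have hT := hCy.add hU
    refine ⟨_, HasFDerivAt.prodMk hφ (HasFDerivAt.prodMk hS hT), fun w => ?_⟩
    simp [Bg, hBg, Ccl, fst1, pr21, pr22, ContinuousLinearMap.smul_apply,
      ContinuousLinearMap.comp_apply, ContinuousLinearMap.prod_apply,
      ContinuousLinearMap.add_apply, ContinuousLinearMap.flip_apply,
      smul_eq_mul, mul_comm, map_add, map_smul, hud _ hx, ← ht', smul_smul]
    rw [show deriv u t' = u' t' from hud _ hx]
    ring
  -- bijectivity
  have hmapsto : Set.MapsTo (Phi g q p r C u)
      {x : ℝ × ℝ × V | x.1 ∈ I} {x : ℝ × ℝ × V | x.1 ∈ I} :=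
    fun x hx => hbij.mapsTo hx
  set Ψ : ℝ × ℝ × V → ℝ × ℝ × V := fun y =>
    (q⁻¹ * (y.1 - p),
     q * (y.2.1 + g (deriv u y.1) ((2:ℝ) • y.2.2 - u y.1) - r),
     e.symm (y.2.2 - u y.1)) with hΨ
  have hΨmaps : Set.MapsTo Ψ {x : ℝ × ℝ × V | x.1 ∈ I} {x : ℝ × ℝ × V | x.1 ∈ I} := by
    intro y hy
    obtain ⟨t₀, ht₀, ht₀eq⟩ := hbij.surjOn hy
    have ht₀eq' : q * t₀ + p = y.1 := ht₀eq
    have : q⁻¹ * (y.1 - p) = t₀ := by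
      rw [← ht₀eq']
      field_simp
      ring
    simpa [Ψ, this] using ht₀
  have hleft : Set.LeftInvOn Ψ (Phi g q p r C u) {x : ℝ × ℝ × V | x.1 ∈ I} := by
    intro y hy
    have h2 : (2:ℝ) • (C y.2.2 + u (q * y.1 + p)) - u (q * y.1 + p)
        = (2:ℝ) • C y.2.2 + u (q * y.1 + p) := by
      module
    simp only [Ψ, Phi, h2]
    refine Prod.ext ?_ (Prod.ext ?_ ?_)
    · field_simp
      ring
    · show q * (-(g (deriv u (q * y.1 + p))) ((2:ℝ) • C y.2.2 + u (q * y.1 + p))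
          + q⁻¹ * y.2.1 + r
          + (g (deriv u (q * y.1 + p))) ((2:ℝ) • C y.2.2 + u (q * y.1 + p)) - r) = y.2.1
      field_simp
      ring
    · show e.symm (C y.2.2 + u (q * y.1 + p) - u (q * y.1 + p)) = y.2.2
      have : C y.2.2 + u (q * y.1 + p) - u (q * y.1 + p) = e y.2.2 := by
        simp [e, LinearEquiv.ofBijective_apply]
      rw [this, LinearEquiv.symm_apply_apply]
  have hright : Set.RightInvOn Ψ (Phi g q p r C u) {x : ℝ × ℝ × V | x.1 ∈ I} := by
    intro y hy
    have h1 : q * (q⁻¹ * (y.1 - p)) + p = y.1 := by field_simp; ring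
    have hC : C (e.symm (y.2.2 - u y.1)) = y.2.2 - u y.1 := by
      have := e.apply_symm_apply (y.2.2 - u y.1)
      simpa [e, LinearEquiv.ofBijective_apply] using this
    have h2 : (2:ℝ) • (y.2.2 - u y.1) + u y.1 = (2:ℝ) • y.2.2 - u y.1 := by
      module
    simp only [Ψ, Phi, h1, hC, h2]
    refine Prod.ext rfl (Prod.ext ?_ ?_)
    · show -(g (deriv u y.1)) ((2:ℝ) • y.2.2 - u y.1)
        + q⁻¹ * (q * (y.2.1 + (g (deriv u y.1)) ((2:ℝ) • y.2.2 - u y.1) - r)) + r = y.2.1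
      field_simp
      ring
    · show y.2.2 - u y.1 + u y.1 = y.2.2
      abel
  have hBijOn : Set.BijOn (Phi g q p r C u)
      {x : ℝ × ℝ × V | x.1 ∈ I} {x : ℝ × ℝ × V | x.1 ∈ I} :=
    Set.InvOn.bijOn ⟨hleft, hright⟩ hmapsto hΨmaps
  refine ⟨hBijOn, ?_, ?_⟩
  · intro x hx
    obtain ⟨D, hD, -⟩ := key x hx
    exact hD.differentiableAt.differentiableWithinAt
  · intro x hx w₁ w₂
    obtain ⟨D, hD, hDap⟩ := key x hx
    rw [hD.fderiv, hDap w₁, hDap w₂]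
    set t' := q * x.1 + p with ht'
    have hx' : t' ∈ I := hbij.mapsTo hx
    have hCAv : ∀ v : V, C (A v) = q ^ 2 • A (C v) := by
      intro v
      have := LinearMap.ext_iff.mp hCA v
      simpa using this
    have hACvv : q ^ 2 * g (A (C x.2.2)) (C x.2.2) = g (A x.2.2) x.2.2 := by
      have h1 := hCiso (A x.2.2) x.2.2
      rw [hCAv] at h1
      simpa [map_smul, smul_eq_mul] using h1
    have hft : f x.1 = q ^ 2 * f t' := hfq x.1 hx
    simp only [ghat, Phi, ← ht', hud _ hx', map_add, map_smul, map_neg,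
      LinearMap.add_apply, LinearMap.smul_apply, smul_eq_mul]
    have hqinv : q * q⁻¹ = 1 := mul_inv_cancel₀ hq0
    linear_combination (q^2*w₁.1*w₂.1* f t') * hCiso x.2.2 x.2.2
      + hCiso w₁.2.2 w₂.2.2
      + w₁.1*w₂.1 * hACvv
      - (w₁.1*w₂.1*(g x.2.2) x.2.2) * hft
      + (q^2*w₁.1*w₂.1* f t') * hg_symm (C x.2.2) (u t')
      + (q^2*w₁.1*w₂.1) * hg_symm (A (C x.2.2)) (u t')
      - (q^2*w₁.1*w₂.1) * hA (u t') (C x.2.2)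
      + (q*w₂.1) * hg_symm (C w₁.2.2) (u' t')
      + ((w₁.1*w₂.2.1 + w₁.2.1*w₂.1)/2) * hqinv
end
end

section
/- Let σ = (q,p,C) satisfy the stated conditions, let b, r ∈ ℝ and w, u ∈ 𝓔, and let e = (1, 0, Id_V), which also satisfies the stated conditions. Then Φ_{(σ,b,w)} ∘ Φ_{(e,r,u)} ∘ (Φ_{(σ,b,w)})⁻¹ = Φ_{(e, q⁻¹·r − 2·Ω(w, σu), σu)}, where (Φ_{(σ,b,w)})⁻¹ denotes the inverse bijection of Φ_{(σ,b,w)}. -/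
noncomputable section

variable {V : Type*} [NormedAddCommGroup V] [NormedSpace ℝ V]

/-- A function with zero derivative on an open convex set is constant there. -/
lemma aux_const_of_deriv_zero {I : Set ℝ} (hIopen : IsOpen I) (hIconv : Convex ℝ I)
    {h : ℝ → ℝ} (hd : ∀ t ∈ I, HasDerivAt h 0 t) {a c : ℝ} (ha : a ∈ I) (hc : c ∈ I) :
    h a = h c := by
  refine hIconv.is_const_of_fderivWithin_eq_zero
    (fun t ht => ((hd t ht).differentiableAt).differentiableWithinAt) (fun t ht => ?_) ha hc
  have := ((hd t ht).hasFDerivAt.hasFDerivWithinAt (s := I)).fderivWithin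
    (hIopen.uniqueDiffOn t ht)
  rw [this]
  ext
  simp

/-- The conjugation formula
`Φ_{(σ,b,w)} ∘ Φ_{(e,r,u)} ∘ (Φ_{(σ,b,w)})⁻¹ = Φ_{(e, q⁻¹·r − 2·Ω(w,σu), σu)}`, with
`e = (1,0,Id_V)` (which also satisfies the stated conditions): stated via the preimage `y`
of `x` under the bijection `Φ_{(σ,b,w)}` of `M̂ = I × ℝ × V`. -/
theorem stmt_8 {V : Type*} [NormedAddCommGroup V] [NormedSpace ℝ V] [FiniteDimensional ℝ V]
    (g : V →ₗ[ℝ] V →ₗ[ℝ] ℝ) (hg_symm : ∀ v w : V, g v w = g w v)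
    (hg_nondeg : ∀ v : V, (∀ w : V, g v w = 0) → v = 0)
    (A : V →ₗ[ℝ] V) (hA : ∀ v w : V, g (A v) w = g v (A w))
    (I : Set ℝ) (hIopen : IsOpen I) (hIne : I.Nonempty) (hIconn : I.OrdConnected)
    (f : ℝ → ℝ) (hf : ContDiffOn ℝ (⊤ : ℕ∞) f I)
    (q p : ℝ) (C : V →ₗ[ℝ] V) (hσ : SigmaCond g A I f q p C)
    (b r : ℝ) (w u : ℝ → V) (hw : w ∈ solSpace I f A) (hu : u ∈ solSpace I f A)
    (t₀ : ℝ) (ht₀ : t₀ ∈ I) :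
    SigmaCond g A I f 1 0 (LinearMap.id : V →ₗ[ℝ] V) ∧
    (∀ y : ℝ × ℝ × V, y.1 ∈ I → ∀ x : ℝ × ℝ × V, x.1 ∈ I →
      Phi g q p b C w y = x →
      Phi g q p b C w (Phi g 1 0 r (LinearMap.id : V →ₗ[ℝ] V) u y)
        = Phi g 1 0
            (q⁻¹ * r
              - 2 * (g (deriv w t₀) (sigmaAct q p C u t₀)
                      - g (w t₀) (deriv (sigmaAct q p C u) t₀)))
            (LinearMap.id : V →ₗ[ℝ] V) (sigmaAct q p C u) x) := by

  obtain ⟨hq, hCg, hCA, hbij, hfq⟩ := hσ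
  have hq0 : q ≠ 0 := ne_of_gt hq
  obtain ⟨hw0, w', hw1, hw2⟩ := hw
  obtain ⟨hu0, u', hu1, hu2⟩ := hu
  constructor
  · refine ⟨one_pos, fun v x => by simp, by ext v; simp, ?_, fun t ht => by norm_num⟩
    simp only [one_mul, add_zero]
    exact Set.bijOn_id I
  set σu : ℝ → V := sigmaAct q p C u with hσu
  set σu' : ℝ → V := fun t => q⁻¹ • C (u' (q⁻¹ * (t - p))) with hσu'
  have hmem : ∀ t ∈ I, q * t + p ∈ I := fun t ht => hbij.mapsTo ht
  have hmem' : ∀ t ∈ I, q⁻¹ * (t - p) ∈ I := by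
    intro t ht
    obtain ⟨s, hs, hst⟩ := hbij.surjOn ht
    have : q⁻¹ * (t - p) = s := by
      simp only at hst
      field_simp
      linarith [hst]
    rw [this]; exact hs
  have hback : ∀ t : ℝ, q * (q⁻¹ * (t - p)) + p = t := by intro t; field_simp; ring
  have hfwd : ∀ t : ℝ, q⁻¹ * ((q * t + p) - p) = t := by intro t; field_simp; ring
  -- continuous versions of C and g
  set Cc : V →L[ℝ] V := LinearMap.toContinuousLinearMap C with hCc
  have hCcC : ∀ v : V, Cc v = C v := fun v => by simp [hCc]
  set B : V →L[ℝ] V →L[ℝ] ℝ :=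
    LinearMap.toContinuousLinearMap
      ((LinearMap.toContinuousLinearMap : (V →ₗ[ℝ] ℝ) ≃ₗ[ℝ] (V →L[ℝ] ℝ)).toLinearMap ∘ₗ g)
    with hBdef
  have hB : ∀ v x : V, B v x = g v x := fun v x => by simp [hBdef]
  -- first derivative of σu
  have haff : ∀ t : ℝ, HasDerivAt (fun τ : ℝ => q⁻¹ * (τ - p)) q⁻¹ t := by
    intro t
    simpa using (((hasDerivAt_id t).sub_const p).const_mul q⁻¹)
  have hσu1 : ∀ t ∈ I, HasDerivAt σu (σu' t) t := by
    intro t ht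
    have h1 : HasDerivAt (fun τ => u (q⁻¹ * (τ - p))) (q⁻¹ • u' (q⁻¹ * (t - p))) t :=
      (hu1 _ (hmem' t ht)).scomp t (haff t)
    have h2 := Cc.hasFDerivAt.comp_hasDerivAt t h1
    have h2' := h2.congr_of_eventuallyEq (f₁ := σu)
      (Filter.Eventually.of_forall fun τ => by simp [hσu, sigmaAct, hCcC])
    simpa [hσu, sigmaAct, hCcC, hσu', map_smul] using h2'
  -- second derivative of σu
  have hσu2 : ∀ t ∈ I, HasDerivAt σu' (f t • σu t + A (σu t)) t := by
    intro t ht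
    have hs := hmem' t ht
    have h1 : HasDerivAt (fun τ => u' (q⁻¹ * (τ - p)))
        (q⁻¹ • (f (q⁻¹ * (t - p)) • u (q⁻¹ * (t - p)) + A (u (q⁻¹ * (t - p))))) t :=
      (hu2 _ hs).scomp t (haff t)
    have h2 := Cc.hasFDerivAt.comp_hasDerivAt t h1
    have h3 := h2.const_smul q⁻¹
    have hfval : f (q⁻¹ * (t - p)) = q ^ 2 * f t := by
      have := hfq _ hs
      rwa [hback t] at this
    have heq : q⁻¹ • Cc (q⁻¹ • (f (q⁻¹ * (t - p)) • u (q⁻¹ * (t - p)) + A (u (q⁻¹ * (t - p)))))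
        = f t • σu t + A (σu t) := by
      have hCA' : ∀ v : V, C (A v) = q ^ 2 • A (C v) := by
        intro v
        have := congrArg (fun (L : V →ₗ[ℝ] V) => L v) hCA
        simpa using this
      simp only [hCcC, map_smul, map_add, hCA', hfval, hσu, sigmaAct, smul_smul, smul_add]
      rw [show q⁻¹ * (q⁻¹ * (q ^ 2 * f t)) = f t by field_simp,
          show q⁻¹ * (q⁻¹ * q ^ 2) = (1:ℝ) by field_simp, one_smul]
    rw [← heq]
    have h3' := h3.congr_of_eventuallyEq (f₁ := σu')
      (Filter.Eventually.of_forall fun τ => by simp [hσu', hCcC])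
    simpa [hσu'] using h3'
  -- the Wronskian-type quantity is constant
  have hΩconst : ∀ t ∈ I,
      g (w' t₀) (σu t₀) - g (w t₀) (σu' t₀) = g (w' t) (σu t) - g (w t) (σu' t) := by
    intro t ht
    have key : ∀ s ∈ I, HasDerivAt (fun τ => B (w' τ) (σu τ) - B (w τ) (σu' τ)) 0 s := by
      intro s hs
      have h1 : HasDerivAt (fun τ => B (w' τ)) (B (f s • w s + A (w s))) s :=
        B.hasFDerivAt.comp_hasDerivAt s (hw2 s hs)
      have h3 := h1.clm_apply (hσu1 s hs)
      have h4 : HasDerivAt (fun τ => B (w τ)) (B (w' s)) s :=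
        B.hasFDerivAt.comp_hasDerivAt s (hw1 s hs)
      have h5 := h4.clm_apply (hσu2 s hs)
      have h6 := h3.sub h5
      have hz : B (f s • w s + A (w s)) (σu s) + B (w' s) (σu' s)
          - (B (w' s) (σu' s) + B (w s) (f s • σu s + A (σu s))) = 0 := by
        simp only [map_add, map_smul, ContinuousLinearMap.add_apply,
          ContinuousLinearMap.coe_smul', Pi.smul_apply, smul_eq_mul, hB, map_add,
          LinearMap.add_apply, LinearMap.smul_apply, hA]
        ring
      rwa [hz] at h6
    have := aux_const_of_deriv_zero hIopen hIconn.convex key ht₀ ht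
    simpa [hB] using this
  -- derivatives as `deriv`
  have dw : ∀ t ∈ I, deriv w t = w' t := fun t ht => (hw1 t ht).deriv
  have du : ∀ t ∈ I, deriv u t = u' t := fun t ht => (hu1 t ht).deriv
  have dσu : ∀ t ∈ I, deriv σu t = σu' t := fun t ht => (hσu1 t ht).deriv
  -- main computation
  intro y hy x hx hxy
  subst hxy
  simp only [Phi] at hx ⊢
  have hy1 : (1:ℝ) * y.1 + 0 = y.1 := by ring
  rw [hy1] at *
  have ht1 : q * y.1 + p ∈ I := hmem y.1 hy
  have hσuval : σu (q * y.1 + p) = C (u y.1) := by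
    show C (u (q⁻¹ * ((q * y.1 + p) - p))) = _
    rw [hfwd]
  have hσu'val : σu' (q * y.1 + p) = q⁻¹ • C (u' y.1) := by
    show q⁻¹ • C (u' (q⁻¹ * ((q * y.1 + p) - p))) = _
    rw [hfwd]
  have h110 : (1:ℝ) * (q * y.1 + p) + 0 = q * y.1 + p := by ring
  rw [h110]
  refine Prod.ext rfl (Prod.ext ?_ ?_)
  · -- second component
    simp only [dw _ ht1, du _ hy, dw _ ht₀, dσu _ ht₀, dσu _ ht1, hσuval, hσu'val,
      LinearMap.id_coe, id_eq]
    have hΩ := hΩconst _ ht1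
    rw [hσuval, hσu'val] at hΩ
    simp only [map_add, map_smul, LinearMap.add_apply, LinearMap.smul_apply, smul_eq_mul,
      hCg] at hΩ ⊢
    rw [hg_symm (C (u' y.1)) (w (q * y.1 + p))] 
    linear_combination (2 : ℝ) * hΩ
  · -- third component
    simp only [hσuval, LinearMap.id_coe, id_eq, map_add]
    abel
end
end

section
/- For every integer m ≥ 3 there exists an m × m integer matrix M ∈ GL_m(ℤ) (that is, with determinant 1 or −1) whose characteristic polynomial has m pairwise distinct real roots, each root λ satisfying λ > 0 and λ ≠ 1, and such that the set of roots is not of the form {λ} for any λ > 0 nor of the form {λ, λ⁻¹} for any λ > 0. -/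
open Polynomial

namespace Stmt15Aux

open Real

/-! ### Generic matrix lemmas -/

lemma charpoly_blockDiagonal {o n R : Type*} [DecidableEq o] [Fintype o] [DecidableEq n]
    [Fintype n] [CommRing R] (M : o → Matrix n n R) :
    (Matrix.blockDiagonal M).charpoly = ∏ k, (M k).charpoly := by
  unfold Matrix.charpoly
  rw [← Matrix.det_blockDiagonal]
  congr 1
  ext ⟨i, a⟩ ⟨j, b⟩
  by_cases hab : a = b
  · subst hab
    by_cases hij : i = j
    · subst hij; simp [Matrix.charmatrix_apply, Matrix.blockDiagonal_apply,
        Matrix.diagonal_apply]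
    · simp [Matrix.charmatrix_apply, Matrix.blockDiagonal_apply, Matrix.diagonal_apply,
        hij, Prod.ext_iff]
  · simp [Matrix.charmatrix_apply, Matrix.blockDiagonal_apply, Matrix.diagonal_apply,
      hab, Prod.ext_iff]

lemma charpoly_fin_two {R : Type*} [CommRing R] (A : Matrix (Fin 2) (Fin 2) R) :
    A.charpoly = X ^ 2 - C (A 0 0 + A 1 1) * X + C (A 0 0 * A 1 1 - A 0 1 * A 1 0) := by
  rw [Matrix.charpoly, Matrix.det_fin_two]
  simp [Matrix.charmatrix_apply_eq, Matrix.charmatrix_apply_ne, map_add, map_sub, map_mul]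
  ring

lemma map_reindex {R S n m : Type*} [DecidableEq n] [DecidableEq m] (e : n ≃ m)
    (A : Matrix n n R) (f : R → S) :
    (Matrix.reindex e e A).map f = Matrix.reindex e e (A.map f) := rfl

/-! ### Quadratic blocks -/

noncomputable def qp (n : ℕ) : ℝ := ((n : ℝ) + Real.sqrt ((n : ℝ) ^ 2 - 4)) / 2
noncomputable def qm (n : ℕ) : ℝ := ((n : ℝ) - Real.sqrt ((n : ℝ) ^ 2 - 4)) / 2

lemma sq_sqrt' {n : ℕ} (hn : 3 ≤ n) : Real.sqrt ((n : ℝ) ^ 2 - 4) ^ 2 = (n : ℝ) ^ 2 - 4 := by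
  rw [Real.sq_sqrt]
  have : (3 : ℝ) ≤ n := by exact_mod_cast hn
  nlinarith

lemma sqrt_pos' {n : ℕ} (hn : 3 ≤ n) : 0 < Real.sqrt ((n : ℝ) ^ 2 - 4) := by
  apply Real.sqrt_pos.2
  have : (3 : ℝ) ≤ n := by exact_mod_cast hn
  nlinarith

lemma qp_root {n : ℕ} (hn : 3 ≤ n) : qp n ^ 2 - n * qp n + 1 = 0 := by
  have h1 := sq_sqrt' hn
  unfold qp; field_simp; nlinarith [h1]

lemma qm_root {n : ℕ} (hn : 3 ≤ n) : qm n ^ 2 - n * qm n + 1 = 0 := by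
  have h1 := sq_sqrt' hn
  unfold qm; field_simp; nlinarith [h1]

lemma qp_ne_qm {n : ℕ} (hn : 3 ≤ n) : qp n ≠ qm n := by
  have := sqrt_pos' hn
  unfold qp qm
  intro h
  nlinarith

lemma quad_pos {n : ℕ} (hn : 3 ≤ n) {x : ℝ} (hx : x ^ 2 - n * x + 1 = 0) : 0 < x := by
  have hn' : (3 : ℝ) ≤ n := by exact_mod_cast hn
  nlinarith [sq_nonneg x]

lemma quad_ne_one {n : ℕ} (hn : 3 ≤ n) {x : ℝ} (hx : x ^ 2 - n * x + 1 = 0) : x ≠ 1 := by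
  have hn' : (3 : ℝ) ≤ n := by exact_mod_cast hn
  intro h; rw [h] at hx; nlinarith

lemma quad_eq_k {n n' : ℕ} {x : ℝ} (hx : x ^ 2 - n * x + 1 = 0)
    (hx' : x ^ 2 - n' * x + 1 = 0) (hpos : 0 < x) : n = n' := by
  have : ((n : ℝ)) = n' := by
    have h : ((n' : ℝ) - n) * x = 0 := by linarith
    rcases mul_eq_zero.1 h with h | h
    · linarith
    · exact absurd h (ne_of_gt hpos)
  exact_mod_cast this

lemma quad_factor {n : ℕ} (hn : 3 ≤ n) :
    (X - C (qp n)) * (X - C (qm n)) = X ^ 2 - C (n : ℝ) * X + 1 := by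
  have h1 : qp n + qm n = (n : ℝ) := by unfold qp qm; ring
  have h2 : qp n * qm n = 1 := by
    have := sq_sqrt' hn
    unfold qp qm; nlinarith
  rw [show (1 : ℝ[X]) = C (qp n * qm n) by rw [h2, map_one], ← h1, map_add, map_mul]
  ring

/-! ### Cubic block roots -/

noncomputable def cr (j : Fin 3) : ℝ := 2 + 2 * Real.cos (2 * π * ((j : ℕ) + 1) / 7)

lemma cos_cubic (k : ℕ) (c : ℝ) (hc : c = Real.cos (2 * π * k / 7)) (h1 : c ≠ 1) :
    8 * c ^ 3 + 4 * c ^ 2 - 4 * c - 1 = 0 := by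
  set θ : ℝ := 2 * π * k / 7 with hθ
  have h4 : (4 : ℝ) * θ = (k : ℤ) * (2 * π) - 3 * θ := by
    push_cast; rw [hθ]; ring
  have hcc : Real.cos (4 * θ) = Real.cos (3 * θ) := by
    rw [h4, Real.cos_int_mul_two_pi_sub]
  have e4 : Real.cos (4 * θ) = 8 * c ^ 4 - 8 * c ^ 2 + 1 := by
    have h2 : (4 : ℝ) * θ = 2 * (2 * θ) := by ring
    rw [h2, Real.cos_two_mul, Real.cos_two_mul, ← hc]; ring
  have e3 : Real.cos (3 * θ) = 4 * c ^ 3 - 3 * c := by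
    rw [Real.cos_three_mul, ← hc]
  have key : 8 * c ^ 4 - 8 * c ^ 2 + 1 = 4 * c ^ 3 - 3 * c := by rw [← e4, ← e3, hcc]
  have h0 : (c - 1) * (8 * c ^ 3 + 4 * c ^ 2 - 4 * c - 1) = 0 := by nlinarith [key]
  rcases mul_eq_zero.1 h0 with h | h
  · exact absurd (by linarith : c = 1) h1
  · exact h

lemma theta_pos (j : Fin 3) : 0 < 2 * π * ((j : ℕ) + 1) / 7 := by
  have hπ := Real.pi_pos; positivity

lemma theta_lt_pi (j : Fin 3) : 2 * π * ((j : ℕ) + 1) / 7 < π := by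
  have hπ := Real.pi_pos
  have : ((j : ℕ) : ℝ) ≤ 2 := by
    have := j.is_lt; exact_mod_cast Nat.lt_succ_iff.mp this
  nlinarith

lemma cos_theta_lt_one (j : Fin 3) : Real.cos (2 * π * ((j : ℕ) + 1) / 7) < 1 := by
  have h := Real.cos_lt_cos_of_nonneg_of_le_pi (le_refl 0) (theta_lt_pi j).le (theta_pos j)
  rwa [Real.cos_zero] at h

lemma neg_one_lt_cos_theta (j : Fin 3) : -1 < Real.cos (2 * π * ((j : ℕ) + 1) / 7) := by
  have h := Real.cos_lt_cos_of_nonneg_of_le_pi (theta_pos j).le (le_refl π) (theta_lt_pi j)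
  rwa [Real.cos_pi] at h

lemma cr_root (j : Fin 3) : cr j ^ 3 - 5 * cr j ^ 2 + 6 * cr j - 1 = 0 := by
  have h := cos_cubic ((j : ℕ) + 1) (Real.cos (2 * π * ((j : ℕ) + 1) / 7))
    (by push_cast; ring_nf) (ne_of_lt (cos_theta_lt_one j))
  unfold cr
  nlinarith [h]

lemma cr_pos (j : Fin 3) : 0 < cr j := by
  have := neg_one_lt_cos_theta j; unfold cr; linarith

lemma cr_ne_one (j : Fin 3) : cr j ≠ 1 := by
  intro h
  have := cr_root j
  rw [h] at this
  norm_num at this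

lemma cr_strictAnti : ∀ {i j : Fin 3}, i < j → cr j < cr i := by
  intro i j hij
  have h1 : 2 * π * ((i : ℕ) + 1) / 7 < 2 * π * ((j : ℕ) + 1) / 7 := by
    have hπ := Real.pi_pos
    have : ((i : ℕ) : ℝ) < (j : ℕ) := by exact_mod_cast hij
    have h2 : 2 * π * ((i : ℕ) + 1) < 2 * π * ((j : ℕ) + 1) := by nlinarith
    linarith [(div_lt_div_iff_of_pos_right (show (0:ℝ) < 7 by norm_num)).2 h2]
  have h := Real.cos_lt_cos_of_nonneg_of_le_pi (theta_pos i).le (theta_lt_pi j).le h1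
  unfold cr; linarith

lemma cr_inj : Function.Injective cr := by
  intro i j h
  rcases lt_trichotomy i j with hij | hij | hij
  · exact absurd h (ne_of_gt (cr_strictAnti hij))
  · exact hij
  · exact absurd h (ne_of_lt (cr_strictAnti hij))

/-! ### A quadratic root is never a cubic root -/

lemma cross_ne {n : ℕ} (hn : 3 ≤ n) {x : ℝ} (hq : x ^ 2 - n * x + 1 = 0)
    (hc : x ^ 3 - 5 * x ^ 2 + 6 * x - 1 = 0) : False := by
  have hn' : (3 : ℝ) ≤ n := by exact_mod_cast hn
  set N : ℝ := (n : ℝ)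
  have hlin : (N ^ 2 - 5 * N + 5) * x = N - 4 := by linear_combination hc - (x + N - 5) * hq
  have hkey : (N - 4) ^ 2 - N * (N - 4) * (N ^ 2 - 5 * N + 5) + (N ^ 2 - 5 * N + 5) ^ 2 = 0 := by
    linear_combination (N ^ 2 - 5 * N + 5) ^ 2 * hq +
      (N * (N ^ 2 - 5 * N + 5) - N + 4 - (N ^ 2 - 5 * N + 5) * x) * hlin
  have hint : -(n : ℤ) ^ 3 + 11 * (n : ℤ) ^ 2 - 38 * n + 41 = 0 := by
    have h2 : ((-(n : ℤ) ^ 3 + 11 * (n : ℤ) ^ 2 - 38 * n + 41 : ℤ) : ℝ) = 0 := by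
      push_cast; linear_combination hkey
    exact_mod_cast h2
  rcases le_or_gt n 10 with h | h
  · interval_cases n <;> omega
  · have h' : (11 : ℤ) ≤ (n : ℤ) := by exact_mod_cast h
    nlinarith [hint, h']

/-- A monic cubic with three distinct roots factors. -/
lemma cubic_factor {p : ℝ[X]} (hp : p.Monic) (hdeg : p.natDegree = 3) (a b c : ℝ)
    (hab : a ≠ b) (hac : a ≠ c) (hbc : b ≠ c)
    (ha : p.IsRoot a) (hb : p.IsRoot b) (hc : p.IsRoot c) :
    p = (X - C a) * (X - C b) * (X - C c) := by
  have da : (X - C a) ∣ p := dvd_iff_isRoot.2 ha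
  have db : (X - C b) ∣ p := dvd_iff_isRoot.2 hb
  have dc : (X - C c) ∣ p := dvd_iff_isRoot.2 hc
  have cab : IsCoprime (X - C a) (X - C b) :=
    isCoprime_X_sub_C_of_isUnit_sub (sub_ne_zero_of_ne hab).isUnit
  have cac : IsCoprime (X - C a) (X - C c) :=
    isCoprime_X_sub_C_of_isUnit_sub (sub_ne_zero_of_ne hac).isUnit
  have cbc : IsCoprime (X - C b) (X - C c) :=
    isCoprime_X_sub_C_of_isUnit_sub (sub_ne_zero_of_ne hbc).isUnit
  have hdvd : (X - C a) * (X - C b) * (X - C c) ∣ p :=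
    (cac.mul_left cbc).mul_dvd (cab.mul_dvd da db) dc
  have hmon : ((X - C a) * (X - C b) * (X - C c)).Monic :=
    ((monic_X_sub_C a).mul (monic_X_sub_C b)).mul (monic_X_sub_C c)
  have h3 : ((X - C a) * (X - C b) * (X - C c)).natDegree = 3 := by
    rw [((monic_X_sub_C a).mul (monic_X_sub_C b)).natDegree_mul (monic_X_sub_C c),
      (monic_X_sub_C a).natDegree_mul (monic_X_sub_C b)]
    simp
  have hdeg' : p.natDegree ≤ ((X - C a) * (X - C b) * (X - C c)).natDegree := by
    rw [h3, hdeg]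
  have := eq_leadingCoeff_mul_of_monic_of_dvd_of_natDegree_le hmon hdvd hdeg'
  rwa [hp.leadingCoeff, map_one, one_mul] at this

lemma cubic_eq :
    (X ^ 3 - C (5:ℝ) * X ^ 2 + C 6 * X - C 1) = ∏ j : Fin 3, (X - C (cr j)) := by
  rw [Fin.prod_univ_three]
  apply cubic_factor (by monicity!) (by compute_degree!)
  · exact cr_inj.ne (by decide)
  · exact cr_inj.ne (by decide)
  · exact cr_inj.ne (by decide)
  · simp [IsRoot]; linear_combination cr_root 0
  · simp [IsRoot]; linear_combination cr_root 1
  · simp [IsRoot]; linear_combination cr_root 2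

/-! ### Matrices -/

def Qmat (n : ℕ) : Matrix (Fin 2) (Fin 2) ℤ := !![0, -1; 1, (n : ℤ)]

def C3mat : Matrix (Fin 3) (Fin 3) ℤ := !![0, 0, 1; 1, 0, -6; 0, 1, 5]

lemma det_Qmat (n : ℕ) : (Qmat n).det = 1 := by
  rw [Matrix.det_fin_two]; simp [Qmat]

lemma det_C3mat : C3mat.det = 1 := by
  rw [Matrix.det_fin_three]; simp [C3mat]

lemma charpoly_Qmat (n : ℕ) :
    ((Qmat n).map ((↑) : ℤ → ℝ)).charpoly = X ^ 2 - C (n : ℝ) * X + 1 := by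
  rw [charpoly_fin_two]
  simp [Qmat]

lemma charpoly_C3mat :
    (C3mat.map ((↑) : ℤ → ℝ)).charpoly = X ^ 3 - C 5 * X ^ 2 + C 6 * X - C 1 := by
  rw [Matrix.charpoly, Matrix.det_fin_three]
  simp [Matrix.charmatrix_apply, Matrix.diagonal_apply, C3mat, Matrix.map_apply]
  ring

/-! ### The root labelling of the quadratic part -/

noncomputable def qroot {t : ℕ} (p : Fin 2 × Fin t) : ℝ :=
  if p.1 = 0 then qp ((p.2 : ℕ) + 3) else qm ((p.2 : ℕ) + 3)

lemma qroot_root {t : ℕ} (p : Fin 2 × Fin t) :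
    qroot p ^ 2 - (((p.2 : ℕ) + 3) : ℕ) * qroot p + 1 = 0 := by
  unfold qroot
  split
  · exact qp_root (by omega)
  · exact qm_root (by omega)

lemma qroot_pos {t : ℕ} (p : Fin 2 × Fin t) : 0 < qroot p :=
  quad_pos (by omega) (qroot_root p)

lemma qroot_ne_one {t : ℕ} (p : Fin 2 × Fin t) : qroot p ≠ 1 :=
  quad_ne_one (by omega) (qroot_root p)

lemma fin_two_cases (b : Fin 2) : b = 0 ∨ b = 1 := by omega

lemma qroot_inj {t : ℕ} : Function.Injective (qroot (t := t)) := by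
  intro p q h
  have hp := qroot_root p
  have hq := qroot_root q
  rw [← h] at hq
  have hk : (p.2 : ℕ) + 3 = (q.2 : ℕ) + 3 := quad_eq_k hp hq (qroot_pos p)
  have h2 : p.2 = q.2 := by
    apply Fin.val_injective; omega
  have h1 : p.1 = q.1 := by
    rcases fin_two_cases p.1 with hp1 | hp1 <;> rcases fin_two_cases q.1 with hq1 | hq1
    · rw [hp1, hq1]
    · exfalso
      rw [qroot, qroot, hp1, hq1, h2] at h
      simp at h
      exact qp_ne_qm (by omega) h
    · exfalso
      rw [qroot, qroot, hp1, hq1, h2] at h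
      simp at h
      exact qp_ne_qm (by omega) h.symm
    · rw [hp1, hq1]
  exact Prod.ext h1 h2

lemma charpoly_quadBlock (t : ℕ) :
    ((Matrix.blockDiagonal (fun i : Fin t => Qmat ((i : ℕ) + 3))).map
      ((↑) : ℤ → ℝ)).charpoly = ∏ p : Fin 2 × Fin t, (X - C (qroot p)) := by
  rw [Matrix.blockDiagonal_map _ _ Int.cast_zero, charpoly_blockDiagonal,
    Fintype.prod_prod_type_right]
  apply Finset.prod_congr rfl
  intro i _
  rw [Fin.prod_univ_two]
  have h0 : qroot ((0 : Fin 2), i) = qp ((i : ℕ) + 3) := by simp [qroot]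
  have h1 : qroot ((1 : Fin 2), i) = qm ((i : ℕ) + 3) := by simp [qroot]
  rw [charpoly_Qmat, h0, h1, quad_factor (by omega)]

/-! ### Genericity from injectivity -/

lemma range_ne {m : ℕ} (hm : 3 ≤ m) (lam : Fin m → ℝ) (hinj : Function.Injective lam) :
    ∀ l : ℝ, 0 < l → Set.range lam ≠ {l} ∧ Set.range lam ≠ ({l, l⁻¹} : Set ℝ) := by
  intro l _
  set i0 : Fin m := ⟨0, by omega⟩
  set i1 : Fin m := ⟨1, by omega⟩
  set i2 : Fin m := ⟨2, by omega⟩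
  have h01 : i0 ≠ i1 := by simp [i0, i1]
  have h02 : i0 ≠ i2 := by simp [i0, i2]
  have h12 : i1 ≠ i2 := by simp [i1, i2]
  constructor
  · intro h
    have m0 : lam i0 ∈ Set.range lam := ⟨i0, rfl⟩
    have m1 : lam i1 ∈ Set.range lam := ⟨i1, rfl⟩
    rw [h, Set.mem_singleton_iff] at m0 m1
    exact h01 (hinj (m0.trans m1.symm))
  · intro h
    have m0 : lam i0 ∈ Set.range lam := ⟨i0, rfl⟩
    have m1 : lam i1 ∈ Set.range lam := ⟨i1, rfl⟩
    have m2 : lam i2 ∈ Set.range lam := ⟨i2, rfl⟩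
    rw [h] at m0 m1 m2
    simp only [Set.mem_insert_iff, Set.mem_singleton_iff] at m0 m1 m2
    rcases m0 with h0 | h0 <;> rcases m1 with h1 | h1 <;> rcases m2 with h2 | h2
    · exact h01 (hinj (h0.trans h1.symm))
    · exact h01 (hinj (h0.trans h1.symm))
    · exact h02 (hinj (h0.trans h2.symm))
    · exact h12 (hinj (h1.trans h2.symm))
    · exact h12 (hinj (h1.trans h2.symm))
    · exact h02 (hinj (h0.trans h2.symm))
    · exact h01 (hinj (h0.trans h1.symm))
    · exact h01 (hinj (h0.trans h1.symm))

end Stmt15Aux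

open Stmt15Aux

/-- For every `m ≥ 3` there is a unimodular integer `m × m` matrix whose characteristic
polynomial has `m` pairwise distinct real roots, all positive and different from `1`, and
whose set of roots is not of the form `{λ}` or `{λ, λ⁻¹}` for any `λ > 0`. -/
theorem stmt_15 (m : ℕ) (hm : 3 ≤ m) :
    ∃ (M : Matrix (Fin m) (Fin m) ℤ) (lam : Fin m → ℝ),
      (M.det = 1 ∨ M.det = -1) ∧
      Function.Injective lam ∧
      (∀ i, 0 < lam i ∧ lam i ≠ 1) ∧
      (M.map ((↑) : ℤ → ℝ)).charpoly = ∏ i, (X - C (lam i)) ∧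
      (∀ l : ℝ, 0 < l → Set.range lam ≠ {l} ∧ Set.range lam ≠ ({l, l⁻¹} : Set ℝ)) := by
  rcases Nat.even_or_odd m with he | ho
  · -- even case : `m = 2 * t`
    obtain ⟨t, ht⟩ := he
    have hm2 : m = 2 * t := by omega
    let e : Fin 2 × Fin t ≃ Fin m := finProdFinEquiv.trans (finCongr hm2.symm)
    refine ⟨Matrix.reindex e e
        (Matrix.blockDiagonal (fun i : Fin t => Qmat ((i : ℕ) + 3))),
      fun j => qroot (e.symm j), ?_, ?_, ?_, ?_, ?_⟩
    · left
      rw [Matrix.det_reindex_self, Matrix.det_blockDiagonal]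
      simp [det_Qmat]
    · exact qroot_inj.comp e.symm.injective
    · exact fun i => ⟨qroot_pos _, qroot_ne_one _⟩
    · rw [map_reindex, Matrix.charpoly_reindex, charpoly_quadBlock t]
      exact (Equiv.prod_comp e.symm (fun p => X - C (qroot p))).symm
    · exact range_ne hm _ (qroot_inj.comp e.symm.injective)
  · -- odd case : `m = 3 + 2 * s`
    obtain ⟨t, ht⟩ := ho
    have hm2 : m = 3 + 2 * (t - 1) := by omega
    set s := t - 1 with hs
    let e : (Fin 3 ⊕ Fin 2 × Fin s) ≃ Fin m :=
      ((Equiv.refl (Fin 3)).sumCongr finProdFinEquiv).trans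
        (finSumFinEquiv.trans (finCongr hm2.symm))
    let root : Fin 3 ⊕ Fin 2 × Fin s → ℝ := Sum.elim cr qroot
    have root_inj : Function.Injective root := by
      intro a b h
      rcases a with a | a <;> rcases b with b | b
      · exact congrArg Sum.inl (cr_inj h)
      · exfalso
        have hq := qroot_root b
        rw [show qroot b = cr a from h.symm] at hq
        exact cross_ne (by omega) hq (cr_root a)
      · exfalso
        have hq := qroot_root a
        rw [show qroot a = cr b from h] at hq
        exact cross_ne (by omega) hq (cr_root b)
      · exact congrArg Sum.inr (qroot_inj h)
    refine ⟨Matrix.reindex e e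
        (Matrix.fromBlocks C3mat 0 0
          (Matrix.blockDiagonal (fun i : Fin s => Qmat ((i : ℕ) + 3)))),
      fun j => root (e.symm j), ?_, ?_, ?_, ?_, ?_⟩
    · left
      rw [Matrix.det_reindex_self, Matrix.det_fromBlocks_zero₂₁, det_C3mat,
        Matrix.det_blockDiagonal]
      simp [det_Qmat]
    · exact root_inj.comp e.symm.injective
    · intro i
      rcases h : e.symm i with a | a
      · exact ⟨by simpa [root, h] using cr_pos a, by simpa [root, h] using cr_ne_one a⟩
      · exact ⟨by simpa [root, h] using qroot_pos a, by simpa [root, h] using qroot_ne_one a⟩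
    · rw [map_reindex, Matrix.charpoly_reindex]
      rw [show (Matrix.fromBlocks C3mat 0 0
          (Matrix.blockDiagonal (fun i : Fin s => Qmat ((i : ℕ) + 3)))).map
            ((↑) : ℤ → ℝ) =
          Matrix.fromBlocks (C3mat.map ((↑) : ℤ → ℝ)) 0 0
            ((Matrix.blockDiagonal (fun i : Fin s => Qmat ((i : ℕ) + 3))).map
              ((↑) : ℤ → ℝ)) by
        rw [Matrix.fromBlocks_map, Matrix.map_zero _ Int.cast_zero,
          Matrix.map_zero _ Int.cast_zero]]
      rw [Matrix.charpoly_fromBlocks_zero₂₁, charpoly_C3mat, cubic_eq,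
        charpoly_quadBlock s]
      rw [show (∏ j : Fin m, (X - C (root (e.symm j)))) = ∏ x, (X - C (root x)) from
        Equiv.prod_comp e.symm (fun x => X - C (root x))]
      rw [Fintype.prod_sum_type]
      rfl
    · exact range_ne hm _ (root_inj.comp e.symm.injective)
end

section
/- For every odd integer n ≥ 5 there exists a ℤ-spectral system (m,k,E,J) with m = n − 2 and k = n; that is, there exist an injective function E : {1,…,2m} → ℤ∖{−1} and a function J : {1,…,2m} → {0,1} such that: (i) k + 1 = 2·E(1); (ii) E(i) + E(i') = −1 and J(i) + J(i') = 1 whenever i + i' = 2m + 1; (iii) E(i) − E(i') = k and J(i) + J(i') = 1 whenever i' = i + 1 is even; and (iv) the set Y = {−1} ∪ {E(i) : i ∈ {1,…,2m} and J(i) = 1} is symmetric about zero, i.e. a ∈ Y if and only if −a ∈ Y. -/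
def aE (h j : ℕ) : ℤ :=
  if j < h then (h : ℤ) + j else if j = h then (h : ℤ) else (j : ℤ) - h

def EE (h i : ℕ) : ℤ :=
  aE h ((i + 1) / 2) - (if i % 2 = 1 then 0 else 2 * (h : ℤ) + 1)

def uu (h j : ℕ) : ℕ :=
  if h % 2 = 0 then j % 2 else (if j % 2 = 0 ∨ j = h then 1 else 0)

def JJ (h i : ℕ) : ℕ :=
  (uu h ((i + 1) / 2) + if i % 2 = 1 then 0 else 1) % 2

lemma specInj (h : ℕ) (hh : 2 ≤ h) : Set.InjOn (EE h) (Set.Icc 1 (4 * h - 2)) := by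
  intro i1 hi1 i2 hi2 he
  simp only [Set.mem_Icc] at hi1 hi2
  simp only [EE, aE] at he
  split_ifs at he <;> omega

set_option maxHeartbeats 1000000 in
lemma specA (h : ℕ) (hh : 2 ≤ h) (i : ℕ) (h1 : 1 ≤ i) (h2 : i ≤ 4 * h - 2) :
    (JJ h i = 0 ∨ JJ h i = 1) ∧ EE h i ≠ -1 ∧
    (JJ h i = 1 → EE h i % 2 = 1 ∧ -(2 * (h : ℤ) - 1) ≤ EE h i ∧ EE h i ≤ 2 * (h : ℤ) - 1) := by
  simp only [EE, aE, JJ, uu]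
  split_ifs <;> (try omega) <;> norm_num <;> omega

set_option maxHeartbeats 1000000 in
lemma specIIE (h : ℕ) (hh : 2 ≤ h) (i i' : ℕ) (h1 : 1 ≤ i) (h2 : i ≤ 4 * h - 2)
    (h1' : 1 ≤ i') (h2' : i' ≤ 4 * h - 2) (hs : i + i' = 4 * h - 1) :
    EE h i + EE h i' = -1 := by
  simp only [EE, aE]
  split_ifs <;> omega

set_option maxHeartbeats 1000000 in
lemma specIIJ (h : ℕ) (hh : 2 ≤ h) (i i' : ℕ) (h1 : 1 ≤ i) (h2 : i ≤ 4 * h - 2)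
    (h1' : 1 ≤ i') (h2' : i' ≤ 4 * h - 2) (hs : i + i' = 4 * h - 1) :
    JJ h i + JJ h i' = 1 := by
  simp only [JJ, uu]
  split_ifs <;> omega

set_option maxHeartbeats 1000000 in
lemma specIII (h : ℕ) (hh : 2 ≤ h) (i i' : ℕ) (h1 : 1 ≤ i) (h2 : i ≤ 4 * h - 2)
    (h1' : 1 ≤ i') (h2' : i' ≤ 4 * h - 2) (hs : i' = i + 1) (hev : i' % 2 = 0) :
    EE h i - EE h i' = 2 * (h : ℤ) + 1 ∧ JJ h i + JJ h i' = 1 := by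
  subst hs
  constructor
  · simp only [EE, aE]
    split_ifs <;> omega
  · simp only [JJ, uu]
    split_ifs <;> omega

lemma specE1 (h : ℕ) (hh : 2 ≤ h) : EE h 1 = (h : ℤ) + 1 := by
  simp only [EE, aE]
  split_ifs <;> omega

set_option maxHeartbeats 1000000 in
lemma specB (h : ℕ) (hh : 2 ≤ h) (a : ℤ) (ha : a % 2 = 1) (hlo : -(2 * (h : ℤ) - 1) ≤ a)
    (hhi : a ≤ 2 * (h : ℤ) - 1) (hne : a ≠ -1) :
    ∃ i, 1 ≤ i ∧ i ≤ 4 * h - 2 ∧ JJ h i = 1 ∧ EE h i = a := by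
  rcases lt_or_ge 0 a with hpos | hneg
  · rcases eq_or_ne a h with hah | hah
    · exact ⟨2 * h - 1, by omega, by omega,
        by simp only [JJ, uu]; split_ifs <;> omega,
        by simp only [EE, aE]; split_ifs <;> omega⟩
    · rcases lt_or_ge (h : ℤ) a with hgt | hlt
      · exact ⟨2 * (a.toNat - h) - 1, by omega, by omega,
          by simp only [JJ, uu]; split_ifs <;> omega,
          by simp only [EE, aE]; split_ifs <;> omega⟩
      · exact ⟨2 * (a.toNat + h) - 1, by omega, by omega,
          by simp only [JJ, uu]; split_ifs <;> omega,
          by simp only [EE, aE]; split_ifs <;> omega⟩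
  · rcases eq_or_ne a (-(h : ℤ) - 1) with hah | hah
    · exact ⟨2 * h, by omega, by omega,
        by simp only [JJ, uu]; split_ifs <;> omega,
        by simp only [EE, aE]; split_ifs <;> omega⟩
    · rcases lt_or_ge (-(h : ℤ) - 1) a with hgt | hlt
      · exact ⟨2 * (a + h + 1).toNat, by omega, by omega,
          by simp only [JJ, uu]; split_ifs <;> omega,
          by simp only [EE, aE]; split_ifs <;> omega⟩
      · exact ⟨2 * (a + 3 * h + 1).toNat, by omega, by omega,
          by simp only [JJ, uu]; split_ifs <;> omega,
          by simp only [EE, aE]; split_ifs <;> omega⟩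

/-- For every odd `n ≥ 5` there exists a `ℤ`-spectral system `(m, k, E, J)` with
`m = n − 2` and `k = n`: an injective `E : {1,…,2m} → ℤ∖{−1}` and `J : {1,…,2m} → {0,1}`
with (i) `k + 1 = 2·E(1)`; (ii) `E(i) + E(i') = −1` and `J(i) + J(i') = 1` whenever
`i + i' = 2m + 1`; (iii) `E(i) − E(i') = k` and `J(i) + J(i') = 1` whenever `i' = i + 1` is
even; and (iv) the set `Y = {−1} ∪ {E(i) : J(i) = 1}` is symmetric about zero. -/
theorem stmt_16 (n : ℕ) (hodd : Odd n) (hn : 5 ≤ n) :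
    ∃ (E : ℕ → ℤ) (J : ℕ → ℕ),
      Set.InjOn E (Set.Icc 1 (2 * (n - 2))) ∧
      (∀ i ∈ Set.Icc 1 (2 * (n - 2)), E i ≠ -1) ∧
      (∀ i ∈ Set.Icc 1 (2 * (n - 2)), J i = 0 ∨ J i = 1) ∧
      ((n : ℤ) + 1 = 2 * E 1) ∧
      (∀ i ∈ Set.Icc 1 (2 * (n - 2)), ∀ i' ∈ Set.Icc 1 (2 * (n - 2)),
        i + i' = 2 * (n - 2) + 1 → E i + E i' = -1 ∧ J i + J i' = 1) ∧
      (∀ i ∈ Set.Icc 1 (2 * (n - 2)), ∀ i' ∈ Set.Icc 1 (2 * (n - 2)),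
        i' = i + 1 → Even i' → E i - E i' = (n : ℤ) ∧ J i + J i' = 1) ∧
      (∀ a : ℤ,
        (a = -1 ∨ ∃ i ∈ Set.Icc 1 (2 * (n - 2)), J i = 1 ∧ E i = a) ↔
        (-a = -1 ∨ ∃ i ∈ Set.Icc 1 (2 * (n - 2)), J i = 1 ∧ E i = -a)) := by
  obtain ⟨h, ht⟩ := hodd
  have hh : 2 ≤ h := by omega
  have hm : 2 * (n - 2) = 4 * h - 2 := by omega
  have hnz : (n : ℤ) = 2 * (h : ℤ) + 1 := by push_cast; omega
  rw [hm]
  refine ⟨EE h, JJ h, specInj h hh, ?_, ?_, ?_, ?_, ?_, ?_⟩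
  · intro i hi
    simp only [Set.mem_Icc] at hi
    exact (specA h hh i hi.1 hi.2).2.1
  · intro i hi
    simp only [Set.mem_Icc] at hi
    exact (specA h hh i hi.1 hi.2).1
  · rw [specE1 h hh, hnz]; ring
  · intro i hi i' hi'
    simp only [Set.mem_Icc] at hi hi'
    intro hs
    exact ⟨specIIE h hh i i' hi.1 hi.2 hi'.1 hi'.2 (by omega),
      specIIJ h hh i i' hi.1 hi.2 hi'.1 hi'.2 (by omega)⟩
  · intro i hi i' hi'
    simp only [Set.mem_Icc] at hi hi'
    intro hs hev
    have hev2 : i' % 2 = 0 := Nat.even_iff.mp hev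
    obtain ⟨hE, hJ⟩ := specIII h hh i i' hi.1 hi.2 hi'.1 hi'.2 hs hev2
    exact ⟨by rw [hE, hnz], hJ⟩
  · have key : ∀ a : ℤ,
        (a = -1 ∨ ∃ i ∈ Set.Icc 1 (4 * h - 2), JJ h i = 1 ∧ EE h i = a) →
        (-a = -1 ∨ ∃ i ∈ Set.Icc 1 (4 * h - 2), JJ h i = 1 ∧ EE h i = -a) := by
      intro a hLHS
      rcases hLHS with rfl | ⟨i, hi, hJ, hE⟩
      · right
        obtain ⟨i, h1, h2, hJ, hE⟩ := specB h hh 1 (by norm_num) (by omega) (by omega) (by norm_num)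
        exact ⟨i, Set.mem_Icc.mpr ⟨h1, h2⟩, hJ, by rw [hE]; norm_num⟩
      · simp only [Set.mem_Icc] at hi
        obtain ⟨hodd, hlo, hhi⟩ := (specA h hh i hi.1 hi.2).2.2 hJ
        rcases eq_or_ne a 1 with rfl | ha1
        · left; norm_num
        · right
          have hne : EE h i ≠ -1 := (specA h hh i hi.1 hi.2).2.1
          obtain ⟨i', h1, h2, hJ', hE'⟩ := specB h hh (-a) (by omega) (by omega) (by omega)
            (by intro hc; apply ha1; omega)
          exact ⟨i', Set.mem_Icc.mpr ⟨h1, h2⟩, hJ', hE'⟩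
    intro a
    constructor
    · exact key a
    · intro hr
      have := key (-a) hr
      simpa using this
end

section
/- Let q > 0 be a real number with q + q⁻¹ ∈ ℤ, and let Y ⊆ ℤ be a finite set symmetric about zero (a ∈ Y if and only if −a ∈ Y). Then the polynomial ∏_{a ∈ Y} (X − q^a) is a monic polynomial with integer coefficients whose constant coefficient is 1 or −1. -/
open Polynomial

/-!
Pairing `a` with `-a`, the product `∏_{a ∈ Y} (X - q^a)` is a product of the factor `X - 1`
(if `0 ∈ Y`) and of quadratics `X² - (q^a + q^{-a}) X + 1`. These have integer coefficients
because `q^n + q^{-n}` is the Dickson polynomial `D_n(1, 1)` evaluated at the integer `q + q⁻¹`.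
The same pairing shows that the product of the roots `∏_{a ∈ Y} q^a` is `1`, so the constant
coefficient is `(-1)^#Y`.
-/

theorem Submonoid.prod_mem_of_neg_symmetric {M : Type*} [CommMonoid M] (S : Submonoid M)
    {f : ℤ → M} (h₀ : f 0 ∈ S) (hpair : ∀ a, f a * f (-a) ∈ S) :
    ∀ Y : Finset ℤ, (∀ a, a ∈ Y ↔ -a ∈ Y) → ∏ a ∈ Y, f a ∈ S := by
  intro Y
  induction Y using Finset.strongInduction with
  | _ Y ih =>
    intro hY
    rcases Y.eq_empty_or_nonempty with rfl | ⟨a, ha⟩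
    · exact S.one_mem
    have hpair_sub : {a, -a} ⊆ Y := by
      simp [Finset.insert_subset_iff, ha, (hY a).1 ha]
    have hrest : ∏ b ∈ Y \ {a, -a}, f b ∈ S :=
      ih _ (Finset.sdiff_ssubset hpair_sub (by simp)) fun b => by
        simp only [Finset.mem_sdiff, Finset.mem_insert, Finset.mem_singleton, hY b]
        exact and_congr_right fun _ => not_congr (by omega)
    have hpair_mem : ∏ b ∈ {a, -a}, f b ∈ S := by
      obtain rfl | ha₀ := eq_or_ne a 0
      · simpa using h₀
      · rw [Finset.prod_pair (by omega)]
        exact hpair a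
    rw [← Finset.prod_sdiff hpair_sub]
    exact S.mul_mem hrest hpair_mem

theorem zpow_add_zpow_neg_mem_range {R K : Type*} [CommRing R] [Field K] (f : R →+* K)
    {q : K} (hq : q ≠ 0) (hsum : q + q⁻¹ ∈ Set.range f) (a : ℤ) :
    q ^ a + q ^ (-a) ∈ Set.range f := by
  obtain ⟨r, hr⟩ := hsum
  have hnat (n : ℕ) : q ^ n + q⁻¹ ^ n ∈ Set.range f :=
    ⟨(dickson 1 1 n).eval r, by
      rw [← eval₂_at_apply, hr, ← eval_map, map_dickson, map_one,
        dickson_one_one_eval_add_inv _ _ (mul_inv_cancel₀ hq)]⟩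
  obtain ⟨n, rfl | rfl⟩ := Int.eq_nat_or_neg a
  · simpa using hnat n
  · simpa [add_comm] using hnat n

theorem X_sub_C_mul_X_sub_C_mem_lifts {R S : Type*} [CommRing R] [CommRing S] (f : R →+* S)
    {x y : S} (hxy : x * y = 1) (hsum : x + y ∈ Set.range f) :
    (X - C x) * (X - C y) ∈ lifts f := by
  obtain ⟨r, hr⟩ := hsum
  refine (mem_lifts _).2 ⟨X ^ 2 - C r * X + 1, ?_⟩
  have hC : C x * C y = 1 := by rw [← C_mul, hxy, C_1]
  simp only [Polynomial.map_add, Polynomial.map_sub, Polynomial.map_mul, Polynomial.map_pow,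
    map_X, map_C, Polynomial.map_one, hr, C_add]
  linear_combination -hC

/-- If `q > 0` with `q + q⁻¹ ∈ ℤ` and `Y ⊆ ℤ` is a finite set symmetric about zero, then
`∏_{a ∈ Y} (X − q^a)` is a monic polynomial with integer coefficients whose constant
coefficient is `1` or `−1`. -/
theorem stmt_17 (q : ℝ) (hq : 0 < q) (hqz : ∃ z : ℤ, (z : ℝ) = q + q⁻¹)
    (Y : Finset ℤ) (hY : ∀ a : ℤ, a ∈ Y ↔ -a ∈ Y) :
    ∃ Q : Polynomial ℤ,
      Q.map (Int.castRingHom ℝ) = ∏ a ∈ Y, (X - C (q ^ a)) ∧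
      Q.Monic ∧ (Q.coeff 0 = 1 ∨ Q.coeff 0 = -1) := by
  have hinv (a : ℤ) : q ^ a * q ^ (-a) = 1 := by
    rw [zpow_neg, mul_inv_cancel₀ (zpow_ne_zero a hq.ne')]
  have hmonic : (∏ a ∈ Y, (X - C (q ^ a))).Monic :=
    monic_prod_of_monic _ _ fun a _ => monic_X_sub_C _
  have hlifts : ∏ a ∈ Y, (X - C (q ^ a)) ∈ lifts (Int.castRingHom ℝ) :=
    (lifts (Int.castRingHom ℝ)).toSubmonoid.prod_mem_of_neg_symmetric
      ((mem_lifts _).2 ⟨X - 1, by simp⟩)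
      (fun a => X_sub_C_mul_X_sub_C_mem_lifts _ (hinv a)
        (zpow_add_zpow_neg_mem_range (Int.castRingHom ℝ) hq.ne' hqz a)) Y hY
  obtain ⟨Q, hQ, -, hQmonic⟩ := lifts_and_degree_eq_and_monic hlifts hmonic
  have hroots : ∏ a ∈ Y, q ^ a = 1 :=
    Submonoid.mem_bot.1 <| (⊥ : Submonoid ℝ).prod_mem_of_neg_symmetric (by simp)
      (fun a => Submonoid.mem_bot.2 (hinv a)) Y hY
  have hcoeff : Q.coeff 0 = (-1) ^ Y.card := by
    have : (Q.coeff 0 : ℝ) = (-1) ^ Y.card := by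
      rw [← eq_intCast (Int.castRingHom ℝ), ← coeff_map, hQ, coeff_zero_eq_eval_zero, eval_prod]
      simp [Finset.prod_neg, hroots]
    exact_mod_cast this
  exact ⟨Q, hQ, hQmonic, hcoeff ▸ neg_one_pow_eq_or ℤ _⟩
end

section
/- Let (V,⟨·,·⟩) be a 2-dimensional real vector space equipped with a nondegenerate symmetric bilinear form ⟨·,·⟩, and let A : V → V be a nonzero linear operator with tr A = 0 which is self-adjoint with respect to ⟨·,·⟩ (i.e. ⟨Av,w⟩ = ⟨v,Aw⟩ for all v,w ∈ V). Then the set of linear isometries C of (V,⟨·,·⟩) (those invertible linear C with ⟨Cv,Cw⟩ = ⟨v,w⟩ for all v,w) satisfying C∘A = A∘C is finite. -/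
open Module


lemma aux_cyclic {V : Type*} [AddCommGroup V] [Module ℝ V] [FiniteDimensional ℝ V]
    (hdim : Module.finrank ℝ V = 2)
    (A : V →ₗ[ℝ] V) (hA0 : A ≠ 0) (htr : LinearMap.trace ℝ V A = 0) :
    ∃ v : V, LinearIndependent ℝ ![v, A v] := by
  by_contra h
  push_neg at h
  have key : ∀ v : V, v ≠ 0 → ∃ a : ℝ, a • v = A v := by
    intro v hv
    have := h v
    rw [LinearIndependent.pair_iff' hv] at this
    push_neg at this
    exact this
  obtain ⟨u, hu⟩ : ∃ u : V, A u ≠ 0 := by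
    by_contra h'
    push_neg at h'
    exact hA0 (LinearMap.ext fun x => by simp [h' x])
  have hu0 : u ≠ 0 := fun h' => hu (by simp [h'])
  obtain ⟨w, hw⟩ : ∃ w : V, w ∉ Submodule.span ℝ {u} := by
    by_contra h'
    push_neg at h'
    have hsp : Submodule.span ℝ {u} = ⊤ := by
      exact eq_top_iff.2 fun x _ => h' x
    have h1 : finrank ℝ (Submodule.span ℝ ({u} : Set V)) = 1 :=
      finrank_span_singleton hu0
    rw [hsp, finrank_top, hdim] at h1
    norm_num at h1
  have hw0 : w ≠ 0 := fun h' => hw (h' ▸ Submodule.zero_mem _)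
  have huw : LinearIndependent ℝ ![u, w] := by
    rw [LinearIndependent.pair_iff' hu0]
    intro a ha
    exact hw (ha ▸ Submodule.smul_mem _ a (Submodule.mem_span_singleton_self u))
  obtain ⟨a, ha⟩ := key u hu0
  obtain ⟨e, he⟩ := key w hw0
  have huw0 : u + w ≠ 0 := by
    intro h'
    apply hw
    have hwu : w = (-1 : ℝ) • u := by
      rw [neg_smul, one_smul]
      exact (neg_eq_of_add_eq_zero_right h').symm
    rw [hwu]
    exact Submodule.smul_mem _ _ (Submodule.mem_span_singleton_self u)
  obtain ⟨d, hd⟩ := key (u + w) huw0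
  have hde : (d - a) • u + (d - e) • w = 0 := by
    have : d • u + d • w = a • u + e • w := by
      rw [← smul_add, hd, map_add, ← ha, ← he]
    rw [← sub_eq_zero] at this
    rw [← this]; module
  obtain ⟨h1, h2⟩ := LinearIndependent.pair_iff.1 huw _ _ hde
  have hda : d = a := by linarith [sub_eq_zero.1 (by linarith : d - a = 0)]
  have hde' : d = e := by linarith [sub_eq_zero.1 (by linarith : d - e = 0)]
  -- now A u = a • u, A w = a • w, trace = 2a = 0
  set B := basisOfLinearIndependentOfCardEqFinrank huw (by simp [hdim]) with hBdef
  have hB : ⇑B = ![u, w] := coe_basisOfLinearIndependentOfCardEqFinrank huw _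
  have htrB := LinearMap.trace_eq_matrix_trace ℝ B A
  rw [htr] at htrB
  have hBu : B 0 = u := by rw [hB]; rfl
  have hBw : B 1 = w := by rw [hB]; rfl
  have hAu : A (B 0) = a • B 0 := by rw [hBu, ← ha]
  have hae : a = e := by rw [← hda, hde']
  have hAw : A (B 1) = a • B 1 := by rw [hBw, ← he, hae]
  have : (0 : ℝ) = a + a := by
    rw [htrB, Matrix.trace, Fin.sum_univ_two]
    simp [Matrix.diag, LinearMap.toMatrix_apply, hAu, hAw, Basis.repr_self]
  have ha0 : a = 0 := by linarith
  rw [ha0, zero_smul] at ha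
  exact hu ha.symm

/-- On a 2-dimensional real vector space with a nondegenerate symmetric bilinear form, every
nonzero traceless self-adjoint operator `A` is generic: only finitely many isometries of the
form commute with `A`. -/

theorem stmt_18 {V : Type*} [AddCommGroup V] [Module ℝ V]
    (hdim : Module.finrank ℝ V = 2)
    (g : V →ₗ[ℝ] V →ₗ[ℝ] ℝ) (hg_symm : ∀ v w : V, g v w = g w v)
    (hg_nondeg : ∀ v : V, (∀ w : V, g v w = 0) → v = 0)
    (A : V →ₗ[ℝ] V) (hA0 : A ≠ 0) (htr : LinearMap.trace ℝ V A = 0)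
    (hA : ∀ v w : V, g (A v) w = g v (A w)) :
    {C : V →ₗ[ℝ] V | Function.Bijective C ∧ (∀ v w : V, g (C v) (C w) = g v w) ∧
        C ∘ₗ A = A ∘ₗ C}.Finite := by
  have hfd : FiniteDimensional ℝ V := FiniteDimensional.of_finrank_pos (by omega)
  obtain ⟨v, hv⟩ : ∃ v : V, LinearIndependent ℝ ![v, A v] := aux_cyclic hdim A hA0 htr
  set B := basisOfLinearIndependentOfCardEqFinrank hv (by simp [hdim]) with hBdef
  have hB : ⇑B = ![v, A v] := coe_basisOfLinearIndependentOfCardEqFinrank hv _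
  have hB0 : B 0 = v := by rw [hB]; rfl
  have hB1 : B 1 = A v := by rw [hB]; rfl
  set α : ℝ := B.repr (A (A v)) 0 with hαdef
  have htrB := LinearMap.trace_eq_matrix_trace ℝ B A
  rw [htr] at htrB
  have hrepr1 : B.repr (A (A v)) 1 = 0 := by
    have h00 : B.repr (A (B 0)) 0 = 0 := by
      rw [hB0, ← hB1, Basis.repr_self]
      simp
    rw [Matrix.trace, Fin.sum_univ_two] at htrB
    simp only [Matrix.diag, LinearMap.toMatrix_apply] at htrB
    rw [h00, hB1] at htrB
    linarith [htrB]
  have hAAv : A (A v) = α • v := by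
    have := B.sum_repr (A (A v))
    rw [Fin.sum_univ_two, hrepr1, zero_smul, add_zero, hB0] at this
    exact this.symm
  have hA2 : ∀ w : V, A (A w) = α • w := by
    have heq : A ∘ₗ A = α • (LinearMap.id : V →ₗ[ℝ] V) := by
      apply B.ext
      intro i
      fin_cases i
      · show (A ∘ₗ A) (B 0) = (α • (LinearMap.id : V →ₗ[ℝ] V)) (B 0)
        simp only [LinearMap.comp_apply, LinearMap.smul_apply, LinearMap.id_apply]
        rw [hB0]
        exact hAAv
      · show (A ∘ₗ A) (B 1) = (α • (LinearMap.id : V →ₗ[ℝ] V)) (B 1)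
        simp only [LinearMap.comp_apply, LinearMap.smul_apply, LinearMap.id_apply]
        rw [hB1, hAAv, map_smul]
    intro w
    have := LinearMap.ext_iff.1 heq w
    simpa using this
  set s : ℝ := Real.sqrt α⁻¹ with hsdef
  apply Set.Finite.subset
    ((((Set.finite_singleton (-(s • A))).insert (s • A)).insert
      (-(LinearMap.id : V →ₗ[ℝ] V))).insert (LinearMap.id : V →ₗ[ℝ] V))
  rintro C ⟨-, hiso, hcomm⟩
  simp only [Set.mem_insert_iff, Set.mem_singleton_iff]
  set a : ℝ := B.repr (C v) 0 with hadef
  set b : ℝ := B.repr (C v) 1 with hbdef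
  have hCv : C v = a • v + b • A v := by
    have := B.sum_repr (C v)
    rw [Fin.sum_univ_two, hB0, hB1] at this
    exact this.symm
  have hC : C = a • LinearMap.id + b • A := by
    apply B.ext
    intro i
    fin_cases i
    · show C (B 0) = (a • (LinearMap.id : V →ₗ[ℝ] V) + b • A) (B 0)
      simp only [LinearMap.add_apply, LinearMap.smul_apply, LinearMap.id_apply]
      rw [hB0]
      exact hCv
    · show C (B 1) = (a • (LinearMap.id : V →ₗ[ℝ] V) + b • A) (B 1)
      simp only [LinearMap.add_apply, LinearMap.smul_apply, LinearMap.id_apply]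
      rw [hB1]
      have h1 : C (A v) = A (C v) := by
        have := LinearMap.ext_iff.1 hcomm v
        simpa using this
      rw [h1, hCv, map_add, map_smul, map_smul, hAAv]
  -- expand the isometry condition
  have hexp : ∀ x y : V, g (C x) (C y) =
      (a ^ 2 + α * b ^ 2) * g x y + (2 * a * b) * g (A x) y := by
    intro x y
    have hCx : C x = a • x + b • A x := by rw [hC]; simp
    have hCy : C y = a • y + b • A y := by rw [hC]; simp
    rw [hCx, hCy]
    simp only [map_add, map_smul, LinearMap.add_apply, LinearMap.smul_apply,
      smul_eq_mul]
    have e1 : g x (A y) = g (A x) y := (hA x y).symm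
    have e2 : g (A x) (A y) = α * g x y := by
      rw [hA x (A y)]
      rw [hA2 y, map_smul, smul_eq_mul]
    rw [e1, e2]
    ring
  -- coefficient equations
  have hzero : (a ^ 2 + α * b ^ 2 - 1) • v + (2 * a * b) • A v = 0 := by
    apply hg_nondeg
    intro w
    have h1 := hiso v w
    rw [hexp v w] at h1
    simp only [map_add, map_smul, LinearMap.add_apply, LinearMap.smul_apply,
      smul_eq_mul]
    nlinarith [h1]
  obtain ⟨hc1, hc2⟩ := LinearIndependent.pair_iff.1 hv _ _ hzero
  have ha1 : a ^ 2 + α * b ^ 2 = 1 := by linarith [hc1]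
  have hab : a * b = 0 := by linarith [hc2]
  rcases mul_eq_zero.1 hab with ha0 | hb0
  · -- a = 0 : C = b • A, α * b ^ 2 = 1
    have hb2 : α * b ^ 2 = 1 := by rw [ha0] at ha1; linarith [ha1]
    have hbne : b ≠ 0 := by
      intro h'; rw [h'] at hb2; norm_num at hb2
    have hαne : α ≠ 0 := by
      intro h'; rw [h'] at hb2; norm_num at hb2
    have hbsq : b ^ 2 = α⁻¹ := by
      rw [inv_eq_one_div, eq_div_iff hαne]
      linear_combination hb2
    have hss : s = |b| := by
      rw [hsdef, ← hbsq, ← Real.sqrt_sq_eq_abs]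
    have hCC : C = b • A := by rw [hC, ha0]; simp
    rcases abs_cases b with ⟨habs, -⟩ | ⟨habs, -⟩
    · right; right; left
      rw [hCC, hss, habs]
    · right; right; right
      rw [hCC, hss, habs, neg_smul, neg_neg]
  · -- b = 0 : C = a • id, a ^ 2 = 1
    have ha2 : a * a = 1 := by rw [hb0] at ha1; nlinarith [ha1]
    have hCC : C = a • (LinearMap.id : V →ₗ[ℝ] V) := by rw [hC, hb0]; simp
    rcases mul_self_eq_one_iff.1 ha2 with h1 | h1
    · left
      rw [hCC, h1, one_smul]
    · right; left
      rw [hCC, h1, neg_smul, one_smul]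
end
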